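/- arXiv:1510.03903 — 8 statements merged into one kernel-verified Lean document; each statement's English description precedes it below -/
import Mathlib

section
/- There exists a partition of the unit interval into k connected subintervals such that each family j receives a piece whose average value (averaged over the family's members' value measures) is at least 1/k. -/
open MeasureTheory Set Filter Topology
open scoped ENNReal NNReal


lemma exists_cut (μ : Measure ℝ) [IsFiniteMeasure μ] (hat : ∀ x : ℝ, μ {x} = 0)
    {a c : ℝ} (hc : 0 < c) (ha : a ≤ 1) (h1 : c ≤ (μ (Icc a 1)).toReal) :
    ∃ T, a ≤ T ∧ T ≤ 1 ∧ (μ (Ico a T)).toReal = c ∧ (μ (Icc a T)).toReal = c ∧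
      ∀ x ≤ T, (μ (Icc a x)).toReal ≤ c := by
  set A : Set ℝ := {x | x ∈ Icc a 1 ∧ c ≤ (μ (Icc a x)).toReal} with hA
  have h1A : (1:ℝ) ∈ A := ⟨⟨ha, le_refl 1⟩, h1⟩
  have hAne : A.Nonempty := ⟨1, h1A⟩
  have hbdd : BddBelow A := ⟨a, fun x hx => hx.1.1⟩
  set T := sInf A with hT
  have haT : a ≤ T := le_csInf hAne fun x hx => hx.1.1
  have hT1 : T ≤ 1 := csInf_le hbdd h1A
  -- below T, the cdf is at most c
  have hlt : ∀ x, x < T → (μ (Icc a x)).toReal ≤ c := by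
    intro x hx
    by_cases hax : a ≤ x
    · by_contra hcon
      push_neg at hcon
      have : x ∈ A := ⟨⟨hax, hx.trans_le hT1 |>.le⟩, hcon.le⟩
      exact absurd (csInf_le hbdd this) (not_le.2 hx)
    · push_neg at hax
      rw [Icc_eq_empty (by exact fun h => absurd (le_trans h (le_refl x)) hax.not_ge)]
      simpa using hc.le
  -- right limit : c ≤ μ (Icc a T)
  have hub : c ≤ (μ (Icc a T)).toReal := by
    have hInter : (⋂ n : ℕ, Icc a (T + 1/(n+1))) = Icc a T := by
      ext x
      simp only [mem_iInter, mem_Icc]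
      constructor
      · rintro h
        refine ⟨(h 0).1, ?_⟩
        refine le_of_forall_pos_le_add fun ε hε => ?_
        obtain ⟨n, hn⟩ := exists_nat_one_div_lt hε
        exact (h n).2.trans (by linarith)
      · rintro ⟨h1, h2⟩ n
        have : (0:ℝ) < 1/(n+1) := by positivity
        exact ⟨h1, by linarith⟩
    have hanti : Antitone fun n : ℕ => Icc a (T + 1/(n+1)) := by
      intro i j hij
      apply Icc_subset_Icc le_rfl
      have : (1:ℝ)/(j+1) ≤ 1/(i+1) := by
        apply one_div_le_one_div_of_le (by positivity)
        exact_mod_cast by omega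
      linarith
    have htend : Tendsto (fun n : ℕ => μ (Icc a (T + 1/(n+1)))) atTop (𝓝 (μ (Icc a T))) := by
      rw [← hInter]
      exact tendsto_measure_iInter_atTop
        (fun n => (measurableSet_Icc).nullMeasurableSet) hanti ⟨0, measure_ne_top μ _⟩
    have htendR : Tendsto (fun n : ℕ => (μ (Icc a (T + 1/(n+1)))).toReal) atTop
        (𝓝 ((μ (Icc a T)).toReal)) := (ENNReal.tendsto_toReal (measure_ne_top μ _)).comp htend
    refine ge_of_tendsto htendR (Eventually.of_forall fun n => ?_)
    have hlt' : T < T + 1/(n+1) := by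
      have : (0:ℝ) < 1/(n+1) := by positivity
      linarith
    obtain ⟨x, hxA, hx⟩ := exists_lt_of_csInf_lt hAne hlt'
    calc c ≤ (μ (Icc a x)).toReal := hxA.2
      _ ≤ (μ (Icc a (T + 1/(n+1)))).toReal :=
        ENNReal.toReal_le_toReal (measure_ne_top μ _) (measure_ne_top μ _) |>.mpr
          (measure_mono (Icc_subset_Icc le_rfl hx.le))
  -- left limit : μ (Ico a T) ≤ c
  have hlb : (μ (Ico a T)).toReal ≤ c := by
    have hUnion : (⋃ n : ℕ, Icc a (T - 1/(n+1))) = Ico a T := by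
      ext x
      simp only [mem_iUnion, mem_Icc, mem_Ico]
      constructor
      · rintro ⟨n, h1, h2⟩
        have : (0:ℝ) < 1/(n+1) := by positivity
        exact ⟨h1, by linarith⟩
      · rintro ⟨h1, h2⟩
        obtain ⟨n, hn⟩ := exists_nat_one_div_lt (sub_pos.2 h2)
        exact ⟨n, h1, by linarith⟩
    have hmono : Monotone fun n : ℕ => Icc a (T - 1/(n+1)) := by
      intro i j hij
      apply Icc_subset_Icc le_rfl
      have : (1:ℝ)/(j+1) ≤ 1/(i+1) := by
        apply one_div_le_one_div_of_le (by positivity)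
        exact_mod_cast by omega
      linarith
    have htend : Tendsto (fun n : ℕ => μ (Icc a (T - 1/(n+1)))) atTop (𝓝 (μ (Ico a T))) := by
      rw [← hUnion]
      exact tendsto_measure_iUnion_atTop hmono
    have htendR : Tendsto (fun n : ℕ => (μ (Icc a (T - 1/(n+1)))).toReal) atTop
        (𝓝 ((μ (Ico a T)).toReal)) := (ENNReal.tendsto_toReal (measure_ne_top μ _)).comp htend
    refine le_of_tendsto htendR (Eventually.of_forall fun n => ?_)
    apply hlt
    have : (0:ℝ) < 1/(n+1) := by positivity
    linarith
  -- μ Icc = μ Ico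
  have heq : μ (Icc a T) = μ (Ico a T) := by
    refine le_antisymm ?_ (measure_mono Ico_subset_Icc_self)
    calc μ (Icc a T) ≤ μ (Ico a T ∪ {T}) := measure_mono (by
          intro x hx
          rcases lt_or_eq_of_le hx.2 with h | h
          · exact Or.inl ⟨hx.1, h⟩
          · exact Or.inr (by simp [h]))
      _ ≤ μ (Ico a T) + μ {T} := measure_union_le _ _
      _ = μ (Ico a T) := by rw [hat T, add_zero]
  have hIccc : (μ (Icc a T)).toReal = c := le_antisymm (by rw [heq]; exact hlb) hub
  refine ⟨T, haT, hT1, by rw [← heq]; exact hIccc, hIccc, fun x hx => ?_⟩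
  rcases lt_or_eq_of_le hx with h | h
  · exact hlt x h
  · rw [h]; exact hIccc.le

lemma key (k : ℕ) (hk : 0 < k) (μ : Fin k → Measure ℝ)
    (hfin : ∀ j, IsFiniteMeasure (μ j)) (hat : ∀ j (x : ℝ), μ j {x} = 0) :
    ∀ (m : ℕ) (S : Finset (Fin k)) (a : ℝ), S.card = m + 1 → a ≤ 1 →
      (∀ j ∈ S, (S.card : ℝ) / k ≤ (μ j (Icc a 1)).toReal) →
      ∃ X : Fin k → Set ℝ,
        (∀ j, (X j).OrdConnected) ∧ (∀ j, MeasurableSet (X j)) ∧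
        (∀ j ∈ S, X j ⊆ Icc a 1) ∧ (∀ j ∉ S, X j = ∅) ∧
        (∀ i ∈ S, ∀ j ∈ S, i ≠ j → Disjoint (X i) (X j)) ∧
        (⋃ j ∈ S, X j) = Icc a 1 ∧
        ∀ j ∈ S, 1 / (k : ℝ) ≤ (μ j (X j)).toReal := by
  have hk' : (0:ℝ) < k := by exact_mod_cast hk
  intro m
  induction m with
  | zero =>
    intro S a hcard ha hval
    obtain ⟨j0, hj0⟩ := Finset.card_eq_one.mp hcard
    subst hj0
    refine ⟨fun j => if j = j0 then Icc a 1 else ∅, ?_, ?_, ?_, ?_, ?_, ?_, ?_⟩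
    · intro j; by_cases h : j = j0 <;> simp [h, ordConnected_Icc, ordConnected_empty]
    · intro j; by_cases h : j = j0 <;> simp [h, measurableSet_Icc]
    · intro j hj; simp at hj; simp [hj]
    · intro j hj; simp at hj; simp [hj]
    · intro i hi j hj hij; simp at hi hj; exact absurd (hi.trans hj.symm) hij
    · simp
    · intro j hj; simp at hj; subst hj
      have := hval j (by simp)
      simpa using this
  | succ m ih =>
    intro S a hcard ha hval
    set c := 1/(k:ℝ) with hc
    have hcpos : 0 < c := by positivity
    have hcut : ∀ j ∈ S, ∃ T, a ≤ T ∧ T ≤ 1 ∧ (μ j (Ico a T)).toReal = c ∧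
        (μ j (Icc a T)).toReal = c ∧ ∀ x ≤ T, (μ j (Icc a x)).toReal ≤ c := by
      intro j hj
      haveI := hfin j
      refine exists_cut (μ j) (hat j) hcpos ha ?_
      refine le_trans ?_ (hval j hj)
      rw [hcard, hc]
      gcongr
      push_cast
      linarith
    choose! T hTa hT1 hIco hIcc hle using hcut
    have hSne : S.Nonempty := Finset.card_pos.mp (by omega)
    obtain ⟨js, hjsS, hmin⟩ := S.exists_min_image T hSne
    set t := T js with ht
    have hat' : a ≤ t := hTa js hjsS
    have ht1 : t ≤ 1 := hT1 js hjsS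
    set S' := S.erase js with hS'
    have hcard' : S'.card = m + 1 := by
      rw [hS', Finset.card_erase_of_mem hjsS, hcard]
      omega
    -- hypothesis for recursion
    have hval' : ∀ j ∈ S', (S'.card : ℝ) / k ≤ (μ j (Icc t 1)).toReal := by
      intro j hj
      haveI := hfin j
      have hjS : j ∈ S := Finset.mem_of_mem_erase hj
      have hsplit : μ j (Icc a 1) = μ j (Ico a t) + μ j (Icc t 1) := by
        rw [← Ico_union_Icc_eq_Icc hat' ht1]
        exact measure_union (by
          rw [Set.disjoint_left]; rintro x ⟨_, hx2⟩ ⟨hx3, _⟩; exact absurd hx3 (not_le.2 hx2))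
          measurableSet_Icc
      have hsplitR : (μ j (Icc a 1)).toReal
          = (μ j (Ico a t)).toReal + (μ j (Icc t 1)).toReal := by
        rw [hsplit, ENNReal.toReal_add (measure_ne_top _ _) (measure_ne_top _ _)]
      have hsmall : (μ j (Ico a t)).toReal ≤ c := by
        calc (μ j (Ico a t)).toReal ≤ (μ j (Icc a t)).toReal :=
              ENNReal.toReal_le_toReal (measure_ne_top _ _) (measure_ne_top _ _) |>.mpr
                (measure_mono Ico_subset_Icc_self)
          _ ≤ c := hle j hjS t (hmin j hjS)
      have hbig := hval j hjS
      rw [hcard] at hbig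
      rw [hcard']
      rw [hsplitR] at hbig
      have : ((m:ℝ) + 1 + 1) / k = ((m:ℝ)+1)/k + 1/k := by ring
      push_cast at hbig ⊢
      rw [← hc] at *
      linarith [this ▸ hbig]
    obtain ⟨X', hOC', hMeas', hSub', hEmpty', hDisj', hUnion', hVal'⟩ :=
      ih S' t hcard' ht1 hval'
    refine ⟨fun j => if j = js then Ico a t else X' j, ?_, ?_, ?_, ?_, ?_, ?_, ?_⟩
    · intro j; by_cases h : j = js <;> simp [h, ordConnected_Ico, hOC' j]
    · intro j; by_cases h : j = js <;> simp [h, measurableSet_Ico, hMeas' j]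
    · intro j hj
      by_cases h : j = js
      · simp only [h, if_pos rfl]
        exact (Ico_subset_Icc_self).trans (Icc_subset_Icc le_rfl ht1)
      · simp only [if_neg h]
        exact (hSub' j (Finset.mem_erase.mpr ⟨h, hj⟩)).trans (Icc_subset_Icc hat' le_rfl)
    · intro j hj
      have h : j ≠ js := fun he => hj (he ▸ hjsS)
      simp only [if_neg h]
      exact hEmpty' j (fun hj' => hj (Finset.mem_of_mem_erase hj'))
    · intro i hi j hj hij
      by_cases hi' : i = js
      · subst hi'
        simp only [if_pos rfl, if_neg (Ne.symm hij)]
        have : X' j ⊆ Icc t 1 := hSub' j (Finset.mem_erase.mpr ⟨Ne.symm hij, hj⟩)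
        rw [Set.disjoint_left]; intro x hx1 hx2
        exact absurd ((this hx2).1) (not_le.2 hx1.2)
      · by_cases hj' : j = js
        · subst hj'
          simp only [if_pos rfl, if_neg hi']
          have : X' i ⊆ Icc t 1 := hSub' i (Finset.mem_erase.mpr ⟨hi', hi⟩)
          rw [Set.disjoint_right]; intro x hx1 hx2
          exact absurd ((this hx2).1) (not_le.2 hx1.2)
        · simp only [if_neg hi', if_neg hj']
          exact hDisj' i (Finset.mem_erase.mpr ⟨hi', hi⟩) j (Finset.mem_erase.mpr ⟨hj', hj⟩) hij
    · have hins : S = insert js S' := (Finset.insert_erase hjsS).symm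
      rw [hins, Finset.set_biUnion_insert]
      have : (⋃ j ∈ S', (if j = js then Ico a t else X' j)) = ⋃ j ∈ S', X' j := by
        apply Set.iUnion₂_congr
        intro j hj
        rw [if_neg (Finset.mem_erase.mp hj).1]
      rw [this, hUnion', if_pos rfl, Ico_union_Icc_eq_Icc hat' ht1]
    · intro j hj
      by_cases h : j = js
      · subst h
        have hx : (fun j' => if j' = j then Ico a t else X' j') j = Ico a t := by simp
        rw [hx, ht]
        exact (hIco j hj).ge
      · simp only [if_neg h]
        exact hVal' j (Finset.mem_erase.mpr ⟨h, hj⟩)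

/-- There exists a partition of the unit interval into k connected
subintervals such that each family j receives a piece whose average value
(averaged over the family's members' value measures) is at least 1/k. -/
theorem avg_proportional_connected_exists
    (k : ℕ) (hk : 0 < k) (n : Fin k → ℕ) (hn : ∀ j, 0 < n j)
    (V : (j : Fin k) → Fin (n j) → Measure ℝ)
    (hprob : ∀ j i, IsProbabilityMeasure (V j i))
    (hsupp : ∀ j i, V j i (Icc (0:ℝ) 1) = 1)
    (hac : ∀ j i, V j i ≪ volume) :
    ∃ X : Fin k → Set ℝ,
      (∀ j, (X j).OrdConnected) ∧
      (∀ j, X j ⊆ Icc (0:ℝ) 1) ∧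
      Pairwise (Function.onFun Disjoint X) ∧
      (⋃ j, X j) = Icc (0:ℝ) 1 ∧
      ∀ j, (∑ i, (V j i (X j)).toReal) / (n j : ℝ) ≥ 1 / (k : ℝ) := by
  set μ : Fin k → Measure ℝ := fun j => ((n j : ℝ≥0))⁻¹ • ∑ i, V j i with hμ
  have hnR : ∀ j, (0:ℝ) < n j := fun j => by exact_mod_cast hn j
  have happ : ∀ j (A : Set ℝ), (μ j A).toReal = (∑ i, (V j i A).toReal) / (n j : ℝ) := by
    intro j A
    have h1 : μ j A = ((((n j : ℝ≥0))⁻¹ : ℝ≥0) : ℝ≥0∞) * (∑ i, V j i A) := by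
      rw [hμ]
      simp only [Measure.smul_apply, Measure.finset_sum_apply, smul_eq_mul, ENNReal.coe_inv]
      · rfl
    have hne : ∀ i ∈ Finset.univ, V j i A ≠ ∞ := fun i _ => by
      haveI := hprob j i; exact measure_ne_top _ _
    rw [h1, ENNReal.toReal_mul, ENNReal.toReal_sum hne]
    rw [ENNReal.coe_toReal, NNReal.coe_inv, NNReal.coe_natCast]
    rw [div_eq_inv_mul]
  have hfin : ∀ j, IsFiniteMeasure (μ j) := by
    intro j
    constructor
    rw [hμ]
    simp only [Measure.smul_apply, Measure.finset_sum_apply, smul_eq_mul]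
    apply ENNReal.mul_lt_top
    · exact ENNReal.coe_lt_top
    · apply ENNReal.sum_lt_top.mpr
      intro i _
      haveI := hprob j i
      exact measure_lt_top _ _
  have hat : ∀ j (x : ℝ), μ j {x} = 0 := by
    intro j x
    rw [hμ]
    simp only [Measure.smul_apply, Measure.finset_sum_apply, smul_eq_mul]
    have : ∀ i ∈ Finset.univ, V j i {x} = 0 := fun i _ => hac j i (by simp)
    rw [Finset.sum_eq_zero this, smul_zero]
  have hval : ∀ j ∈ (Finset.univ : Finset (Fin k)),
      ((Finset.univ : Finset (Fin k)).card : ℝ) / k ≤ (μ j (Icc (0:ℝ) 1)).toReal := by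
    intro j _
    rw [happ]
    have : ∀ i ∈ Finset.univ, (V j i (Icc (0:ℝ) 1)).toReal = 1 := fun i _ => by
      rw [hsupp j i]; simp
    rw [Finset.sum_congr rfl this]
    simp only [Finset.sum_const, Finset.card_univ, Fintype.card_fin, nsmul_eq_mul, mul_one]
    rw [div_self (hnR j).ne', div_self (by exact_mod_cast hk.ne' : (k:ℝ) ≠ 0)]
  have hcard : (Finset.univ : Finset (Fin k)).card = (k - 1) + 1 := by
    simp [Finset.card_univ]; omega
  obtain ⟨X, hOC, hMeas, hSub, _, hDisj, hUnion, hVal⟩ :=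
    key k hk μ hfin hat (k-1) Finset.univ 0 hcard zero_le_one hval
  refine ⟨X, hOC, fun j => hSub j (Finset.mem_univ j), ?_, ?_, ?_⟩
  · intro i j hij
    exact hDisj i (Finset.mem_univ i) j (Finset.mem_univ j) hij
  · rw [← hUnion]
    simp
  · intro j
    rw [ge_iff_le, ← happ]
    exact hVal j (Finset.mem_univ j)
end

section
/- For every k >= 2 there exist k additive nonatomic probability measures W_1,...,W_k on [0,1] (family average valuations) and entitlements w_1 = k^2/(k^2+k-1) and w_2 = ... = w_k = 1/(k^2+k-1) summing to 1, such that every allocation X_1,...,X_k of [0,1] (each X_j a finite union of intervals) satisfying W_j(X_j) >= w_j for all j has total number of connected components at least 2k-1. -/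
open MeasureTheory Set

/-- A set is a union of `m` intervals. -/
def IsUnionOfIntervals (S : Set ℝ) (m : ℕ) : Prop :=
  ∃ I : Fin m → Set ℝ, (∀ i, (I i).OrdConnected) ∧ S = ⋃ i, I i

/-- lower bound of 2k-1 components for average proportionality with
the given different entitlements. -/
theorem avg_proportional_entitlements_lower_bound (k : ℕ) (hk : 2 ≤ k) :
    ∃ W : Fin k → Measure ℝ,
      (∀ j, IsProbabilityMeasure (W j)) ∧
      (∀ j, W j (Icc (0:ℝ) 1) = 1) ∧
      (∀ j, W j ≪ volume) ∧
      ∃ w : Fin k → ℝ,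
        w ⟨0, by omega⟩ = (k:ℝ)^2 / ((k:ℝ)^2 + k - 1) ∧
        (∀ j : Fin k, (j : ℕ) ≠ 0 → w j = 1 / ((k:ℝ)^2 + k - 1)) ∧
        (∑ j, w j) = 1 ∧
        ∀ (X : Fin k → Set ℝ) (m : Fin k → ℕ),
          (∀ j, IsUnionOfIntervals (X j) (m j)) →
          Pairwise (Function.onFun Disjoint X) →
          (⋃ j, X j) = Icc (0:ℝ) 1 →
          (∀ j, (W j (X j)).toReal ≥ w j) →
          2 * k - 1 ≤ ∑ j, m j := by
  classical
  have hK2 : (2:ℝ) ≤ (k:ℝ) := by exact_mod_cast hk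
  set K : ℝ := (k:ℝ) with hKdef
  have hK0 : (0:ℝ) < K := by linarith
  have hD : (0:ℝ) < K^2 + K - 1 := by nlinarith
  set ε : ℝ := 1 / (2 * K^3) with hεdef
  have hε : 0 < ε := by positivity
  have h2e : 2 * ε = 1 / K^3 := by rw [hεdef]; field_simp
  have key : (K-1)/(K^2+K-1) + 2*ε < 1/K := by
    rw [h2e, div_add_div _ _ (ne_of_gt hD) (by positivity),
      div_lt_div_iff₀ (mul_pos hD (by positivity)) hK0]
    nlinarith [mul_pos (mul_pos hK0 (show (0:ℝ) < K-1 by linarith))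
      (show (0:ℝ) < 2*K^2-1 by nlinarith)]
  have hhalf : 0 < 1/K - 2*ε := by
    have h1 : 0 ≤ (K-1)/(K^2+K-1) := div_nonneg (by linarith) (le_of_lt hD)
    linarith
  have hεK : ε < 1/K := by linarith
  -- the measures
  set W : Fin k → Measure ℝ := fun j =>
    if (j:ℕ) = 0 then volume.restrict (Icc 0 1)
    else (ENNReal.ofReal (2*ε))⁻¹ • volume.restrict (Icc (((j:ℕ):ℝ)/K - ε) (((j:ℕ):ℝ)/K + ε))
    with hW
  have hjbound : ∀ j : Fin k, (j:ℕ) ≠ 0 →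
      (1:ℝ)/K ≤ ((j:ℕ):ℝ)/K ∧ ((j:ℕ):ℝ)/K ≤ 1 - 1/K := by
    intro j hj
    have h1 : (1:ℝ) ≤ ((j:ℕ):ℝ) := by exact_mod_cast Nat.one_le_iff_ne_zero.mpr hj
    have h2 : ((j:ℕ):ℝ) ≤ K - 1 := by
      have h0 : (j:ℕ) + 1 ≤ k := j.isLt
      have : ((j:ℕ):ℝ) + 1 ≤ K := by rw [hKdef]; exact_mod_cast h0
      linarith
    constructor
    · gcongr
    · have h3 : ((j:ℕ):ℝ)/K ≤ (K-1)/K := by gcongr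
      have e : (K-1)/K = 1 - 1/K := by field_simp
      linarith
  have hIccsub : ∀ j : Fin k, (j:ℕ) ≠ 0 →
      Icc (((j:ℕ):ℝ)/K - ε) (((j:ℕ):ℝ)/K + ε) ⊆ Icc (0:ℝ) 1 := by
    intro j hj
    obtain ⟨h1, h2⟩ := hjbound j hj
    have hK1 : 0 < 1/K := by positivity
    exact Icc_subset_Icc (by linarith) (by linarith)
  have hvolIcc : ∀ j : Fin k, volume (Icc (((j:ℕ):ℝ)/K - ε) (((j:ℕ):ℝ)/K + ε))
      = ENNReal.ofReal (2*ε) := by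
    intro j
    rw [Real.volume_Icc]
    congr 1
    ring
  have h2e0 : ENNReal.ofReal (2*ε) ≠ 0 := by
    simp [ENNReal.ofReal_eq_zero]; linarith
  have h2etop : ENNReal.ofReal (2*ε) ≠ ⊤ := ENNReal.ofReal_ne_top
  refine ⟨W, ?_, ?_, ?_, ?_⟩
  · -- probability measures
    intro j
    constructor
    by_cases hj : (j:ℕ) = 0
    · simp only [hW, hj, if_pos]
      rw [Measure.restrict_apply_univ, Real.volume_Icc]
      norm_num
    · simp only [hW, hj, if_neg, Measure.smul_apply, Measure.restrict_apply_univ, smul_eq_mul,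
        hvolIcc j, if_false]
      exact ENNReal.inv_mul_cancel h2e0 h2etop
  · -- mass on [0,1]
    intro j
    by_cases hj : (j:ℕ) = 0
    · simp only [hW, hj, if_pos]
      rw [Measure.restrict_apply measurableSet_Icc, inter_self, Real.volume_Icc]
      norm_num
    · simp only [hW, hj, if_neg, Measure.smul_apply, smul_eq_mul, if_false]
      rw [Measure.restrict_apply measurableSet_Icc,
        inter_eq_self_of_subset_right (hIccsub j hj), hvolIcc j]
      exact ENNReal.inv_mul_cancel h2e0 h2etop
  · -- absolute continuity
    intro j
    by_cases hj : (j:ℕ) = 0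
    · simp only [hW, hj, if_pos]
      exact Measure.absolutelyContinuous_of_le Measure.restrict_le_self
    · simp only [hW, hj, if_neg, if_false]
      exact (Measure.absolutelyContinuous_of_le Measure.restrict_le_self).smul_left _
  set z : Fin k := ⟨0, by omega⟩ with hz
  set w : Fin k → ℝ := fun j => if (j:ℕ) = 0 then K^2/(K^2+K-1) else 1/(K^2+K-1) with hw
  refine ⟨w, by simp [hw, hz], fun j hj => by simp [hw, hj], ?_, ?_⟩
  · -- sum of entitlements
    have hrw : ∀ j : Fin k, w j = 1/(K^2+K-1) +
        (if j = z then K^2/(K^2+K-1) - 1/(K^2+K-1) else 0) := by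
      intro j
      by_cases hj : j = z
      · subst hj; simp [hw, hz]
      · have : (j:ℕ) ≠ 0 := by
          intro h; exact hj (Fin.ext (by simpa [hz] using h))
        simp [hw, this, hj]
    rw [Finset.sum_congr rfl (fun j _ => hrw j), Finset.sum_add_distrib,
      Finset.sum_ite_eq' Finset.univ z, Finset.sum_const, Finset.card_univ]
    simp only [Finset.mem_univ, if_pos, Fintype.card_fin, nsmul_eq_mul]
    rw [← hKdef]
    field_simp [ne_of_gt hD]
    ring_nf
    rw [show K * (-1 + K + K ^ 2)⁻¹ + K ^ 2 * (-1 + K + K ^ 2)⁻¹ - (-1 + K + K ^ 2)⁻¹ = (-1 + K + K ^ 2) * (-1 + K + K ^ 2)⁻¹ by ring]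
    exact mul_inv_cancel₀ (ne_of_gt (by linarith))
  · -- main lower bound
    intro X m hX hdisj hcover hval
    have hXmeas : ∀ j, MeasurableSet (X j) := by
      intro j
      obtain ⟨I, hI, hEq⟩ := hX j
      rw [hEq]
      exact MeasurableSet.iUnion fun i => (hI i).measurableSet
    have hXsub : ∀ j, X j ⊆ Icc (0:ℝ) 1 := by
      intro j
      rw [← hcover]
      exact subset_iUnion X j
    -- each small player's piece meets its little interval
    have hyex : ∀ j : Fin k, (j:ℕ) ≠ 0 →
        (X j ∩ Icc (((j:ℕ):ℝ)/K - ε) (((j:ℕ):ℝ)/K + ε)).Nonempty := by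
      intro j hj
      apply nonempty_of_measure_ne_zero (μ := volume)
      intro h0
      have hWj : W j (X j) = 0 := by
        simp only [hW, hj, if_neg, if_false, Measure.smul_apply, smul_eq_mul,
          Measure.restrict_apply (hXmeas j), h0, mul_zero]
      have := hval j
      rw [hWj] at this
      simp only [ENNReal.toReal_zero, hw, hj, if_neg, if_false, ge_iff_le] at this
      have : (0:ℝ) < 1/(K^2+K-1) := by positivity
      linarith [hval j, this]
    -- the big player's piece meets every gap
    have hxex : ∀ i : Fin k,
        (X z ∩ Ioo (((i:ℕ):ℝ)/K + ε) ((((i:ℕ):ℝ)+1)/K - ε)).Nonempty := by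
      intro i
      by_contra hcon
      rw [Set.not_nonempty_iff_eq_empty] at hcon
      have hi0 : (0:ℝ) ≤ ((i:ℕ):ℝ) := by positivity
      have hik : ((i:ℕ):ℝ) + 1 ≤ K := by
        have h0 : (i:ℕ) + 1 ≤ k := i.isLt
        rw [hKdef]; exact_mod_cast h0
      have hGsub : Ioo (((i:ℕ):ℝ)/K + ε) ((((i:ℕ):ℝ)+1)/K - ε) ⊆ Icc (0:ℝ) 1 := by
        intro t ht
        constructor
        · have : 0 ≤ ((i:ℕ):ℝ)/K := by positivity
          linarith [ht.1]
        · have : (((i:ℕ):ℝ)+1)/K ≤ 1 := by rw [div_le_one hK0]; linarith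
          linarith [ht.2]
      have hGdisj : Disjoint (X z) (Ioo (((i:ℕ):ℝ)/K + ε) ((((i:ℕ):ℝ)+1)/K - ε)) :=
        Set.disjoint_iff_inter_eq_empty.mpr hcon
      have hle : volume (X z) + volume (Ioo (((i:ℕ):ℝ)/K + ε) ((((i:ℕ):ℝ)+1)/K - ε))
          ≤ volume (Icc (0:ℝ) 1) := by
        rw [← measure_union hGdisj measurableSet_Ioo]
        exact measure_mono (union_subset (hXsub z) hGsub)
      have hIcc1 : volume (Icc (0:ℝ) 1) = 1 := by rw [Real.volume_Icc]; norm_num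
      have hGvol : volume (Ioo (((i:ℕ):ℝ)/K + ε) ((((i:ℕ):ℝ)+1)/K - ε))
          = ENNReal.ofReal (1/K - 2*ε) := by
        rw [Real.volume_Ioo]
        congr 1
        field_simp
        ring
      have hXztop : volume (X z) ≠ ⊤ := by
        refine ne_top_of_le_ne_top ?_ (measure_mono (hXsub z))
        rw [hIcc1]; exact ENNReal.one_ne_top
      have htr := ENNReal.toReal_mono (by rw [hIcc1]; exact ENNReal.one_ne_top) hle
      rw [hIcc1, ENNReal.toReal_one, hGvol,
        ENNReal.toReal_add hXztop ENNReal.ofReal_ne_top,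
        ENNReal.toReal_ofReal (le_of_lt hhalf)] at htr
      -- value of big player
      have hWz : W z (X z) = volume (X z) := by
        simp only [hW, hz, if_pos]
        rw [Measure.restrict_apply (hXmeas z), inter_eq_self_of_subset_left (hXsub z)]
      have hvz := hval z
      rw [hWz] at hvz
      have hwz : w z = K^2/(K^2+K-1) := by simp [hw, hz]
      rw [hwz] at hvz
      have hKsq : K^2/(K^2+K-1) + (K-1)/(K^2+K-1) = 1 := by
        rw [← add_div]
        rw [div_eq_one_iff_eq (ne_of_gt hD)]
        ring
      linarith
    choose xx hxx using hxex
    choose yy hyy using hyex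
    obtain ⟨I, hIoc, hIeq⟩ := hX z
    have hmem : ∀ i : Fin k, ∃ t, xx i ∈ I t := by
      intro i
      have := (hxx i).1
      rw [hIeq] at this
      exact mem_iUnion.mp this
    choose f hf using hmem
    have hmain : ∀ a b : Fin k, (a:ℕ) < (b:ℕ) → f a ≠ f b := by
      intro a b hab hfeq
      have hbk : (b:ℕ) < k := b.isLt
      set j : Fin k := ⟨(a:ℕ)+1, by omega⟩ with hj
      have hjne : (j:ℕ) ≠ 0 := by simp [hj]
      have hyj := hyy j hjne
      have hjval : ((j:ℕ):ℝ) = ((a:ℕ):ℝ) + 1 := by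
        simp [hj]
      have hy1 : (((a:ℕ):ℝ)+1)/K - ε ≤ yy j hjne := by
        have := hyj.2.1
        rwa [hjval] at this
      have hy2 : yy j hjne ≤ (((a:ℕ):ℝ)+1)/K + ε := by
        have := hyj.2.2
        rwa [hjval] at this
      have hxa : xx a < yy j hjne := lt_of_lt_of_le (hxx a).2.2 hy1
      have hxb : yy j hjne < xx b := by
        have hcast : ((a:ℕ):ℝ) + 1 ≤ ((b:ℕ):ℝ) := by exact_mod_cast hab
        have hdiv : (((a:ℕ):ℝ)+1)/K ≤ ((b:ℕ):ℝ)/K := by gcongr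
        have := (hxx b).2.1
        linarith
      have hyI : yy j hjne ∈ I (f a) := by
        have h1 : xx a ∈ I (f a) := hf a
        have h2 : xx b ∈ I (f a) := by rw [hfeq]; exact hf b
        exact (hIoc (f a)).out h1 h2 ⟨le_of_lt hxa, le_of_lt hxb⟩
      have hyXz : yy j hjne ∈ X z := by
        rw [hIeq]
        exact mem_iUnion.mpr ⟨f a, hyI⟩
      have hzj : z ≠ j := by
        intro h
        have : (z:ℕ) = (j:ℕ) := by rw [h]
        simp [hz, hj] at this
      exact Set.disjoint_left.mp (hdisj hzj) hyXz hyj.1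
    have hfinj : Function.Injective f := by
      intro a b hab
      by_contra hne
      have hval_ne : (a:ℕ) ≠ (b:ℕ) := fun h => hne (Fin.ext h)
      rcases Nat.lt_or_ge (a:ℕ) (b:ℕ) with h | h
      · exact hmain a b h hab
      · exact hmain b a (by omega) hab.symm
    have hmz : k ≤ m z := by
      simpa using Fintype.card_le_of_injective f hfinj
    have hm1 : ∀ j : Fin k, j ≠ z → 1 ≤ m j := by
      intro j hjz
      have hj : (j:ℕ) ≠ 0 := by
        intro h
        exact hjz (Fin.ext (by simpa [hz] using h))
      by_contra h
      have hm0 : m j = 0 := by omega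
      obtain ⟨I', _, hEq'⟩ := hX j
      have hmemy : yy j hj ∈ X j := (hyy j hj).1
      rw [hEq'] at hmemy
      obtain ⟨t, _⟩ := mem_iUnion.mp hmemy
      exact absurd t.isLt (by omega)
    have hsum : (∑ j, m j) = m z + ∑ j ∈ Finset.univ.erase z, m j :=
      (Finset.add_sum_erase _ _ (Finset.mem_univ z)).symm
    have hcard : (Finset.univ.erase z).card = k - 1 := by
      rw [Finset.card_erase_of_mem (Finset.mem_univ z), Finset.card_univ, Fintype.card_fin]
    have hrest : k - 1 ≤ ∑ j ∈ Finset.univ.erase z, m j := by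
      calc k - 1 = (Finset.univ.erase z).card • 1 := by rw [smul_eq_mul, mul_one, hcard]
      _ ≤ ∑ j ∈ Finset.univ.erase z, m j := by
          apply Finset.card_nsmul_le_sum
          intro j hjmem
          exact hm1 j (Finset.mem_erase.mp hjmem).1
    omega
end

section
/- A solution to the unanimous-proportional division problem with N(K-1)+1 agents in K equal-entitlement families yields a solution to the exact division problem for N agents and K pieces: if for any grouping into K families (K-1 families each consisting of copies of the N given agents, plus one family with a single agent whose measure is the average of the N measures) there is an allocation where every agent values his family's piece at least 1/K, then the pieces X_1,...,X_{K-1} (and X_K) satisfy V_i(X_j) = 1/K for all i in 1..N and all j in 1..K. -/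
open MeasureTheory Set

lemma all_eq_of_sum_ge {ι : Type*} (s : Finset ι) (f : ι → ℝ) (c : ℝ)
    (hle : ∀ i ∈ s, f i ≤ c) (hsum : (s.card : ℝ) * c ≤ ∑ i ∈ s, f i) :
    ∀ i ∈ s, f i = c := by
  intro i hi
  by_contra hne
  have hlt : f i < c := lt_of_le_of_ne (hle i hi) hne
  have h : ∑ j ∈ s, f j < ∑ _j ∈ s, c := Finset.sum_lt_sum hle ⟨i, hi, hlt⟩
  rw [Finset.sum_const, nsmul_eq_mul] at h
  linarith

lemma all_eq_of_sum_le {ι : Type*} (s : Finset ι) (f : ι → ℝ) (c : ℝ)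
    (hge : ∀ i ∈ s, c ≤ f i) (hsum : ∑ i ∈ s, f i ≤ (s.card : ℝ) * c) :
    ∀ i ∈ s, f i = c := by
  have := all_eq_of_sum_ge s (fun i => -f i) (-c) (fun i hi => by simpa using hge i hi)
    (by simpa [Finset.sum_neg_distrib, mul_neg] using neg_le_neg hsum)
  intro i hi
  have h2 : -f i = -c := this i hi
  linarith

/-- a unanimous-proportional division for the constructed family
instance (K-1 families each containing copies of the N agents, plus one family
with a single agent holding the average measure) is an exact division: every
agent values every piece exactly 1/K. -/
theorem unanimous_implies_exact
    (N K : ℕ) (hN : 1 ≤ N) (hK : 2 ≤ K)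
    (V : Fin N → Measure ℝ)
    (hprob : ∀ i, IsProbabilityMeasure (V i))
    (hsupp : ∀ i, V i (Icc (0:ℝ) 1) = 1)
    (hac : ∀ i, V i ≪ volume)
    (X : Fin K → Set ℝ)
    (hmeas : ∀ j, MeasurableSet (X j))
    (hdisj : Pairwise (Function.onFun Disjoint X))
    (hcover : (⋃ j, X j) = Icc (0:ℝ) 1)
    -- each of the first K-1 families contains copies of all N agents, and each
    -- member values his family's piece at least 1/K:
    (hfirst : ∀ (i : Fin N) (j : Fin K), (j : ℕ) < K - 1 → (V i (X j)).toReal ≥ 1 / (K : ℝ))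
    -- the K-th family's single agent has the average measure V* and values his
    -- family's piece at least 1/K:
    (hlast : (∑ i, (V i (X ⟨K - 1, by omega⟩)).toReal) / (N : ℝ) ≥ 1 / (K : ℝ)) :
    ∀ (i : Fin N) (j : Fin K), (V i (X j)).toReal = 1 / (K : ℝ) := by
  set L : Fin K := ⟨K - 1, by omega⟩ with hL
  have hKpos : (0:ℝ) < K := by positivity
  have hNpos : (0:ℝ) < N := by
    have : (1:ℝ) ≤ N := by exact_mod_cast hN
    linarith
  -- total value is 1 for each agent
  have hsum : ∀ i, ∑ j, (V i (X j)).toReal = 1 := by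
    intro i
    haveI := hprob i
    have h := measure_iUnion (μ := V i) hdisj hmeas
    rw [hcover, hsupp i, tsum_fintype] at h
    have hfin : ∀ j ∈ Finset.univ, V i (X j) ≠ ⊤ := fun j _ => measure_ne_top _ _
    rw [← ENNReal.toReal_sum hfin, ← h]
    simp
  -- j ≠ L ↔ j.val < K - 1
  have hne_iff : ∀ j : Fin K, j ≠ L → (j : ℕ) < K - 1 := by
    intro j hj
    have h1 : (j : ℕ) < K := j.isLt
    have h2 : (j : ℕ) ≠ K - 1 := fun h => hj (Fin.ext h)
    omega
  have hcard : ((Finset.univ.erase L).card : ℝ) = (K : ℝ) - 1 := by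
    rw [Finset.card_erase_of_mem (Finset.mem_univ L)]
    simp only [Finset.card_univ, Fintype.card_fin]
    have : (1:ℕ) ≤ K := by omega
    push_cast [Nat.cast_sub this]
    ring
  -- decomposition of the sum
  have hsplit : ∀ i, (∑ j ∈ Finset.univ.erase L, (V i (X j)).toReal)
      + (V i (X L)).toReal = 1 := by
    intro i
    rw [Finset.sum_erase_add _ _ (Finset.mem_univ L)]
    exact hsum i
  -- each agent values the last piece at most 1/K
  have hlast_le : ∀ i, (V i (X L)).toReal ≤ 1 / (K : ℝ) := by
    intro i
    have hge : ∀ j ∈ Finset.univ.erase L, 1 / (K:ℝ) ≤ (V i (X j)).toReal := by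
      intro j hj
      exact hfirst i j (hne_iff j (Finset.ne_of_mem_erase hj))
    have hlb : ((Finset.univ.erase L).card : ℝ) * (1 / K)
        ≤ ∑ j ∈ Finset.univ.erase L, (V i (X j)).toReal := by
      have := Finset.card_nsmul_le_sum (Finset.univ.erase L)
        (fun j => (V i (X j)).toReal) (1 / (K:ℝ)) hge
      simpa [nsmul_eq_mul] using this
    have := hsplit i
    rw [hcard] at hlb
    have hK1 : ((K:ℝ) - 1) * (1 / K) = 1 - 1 / K := by field_simp
    linarith [hlb, this, hK1.symm ▸ hlb]
  -- equality for the last piece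
  have hlast_eq : ∀ i, (V i (X L)).toReal = 1 / (K : ℝ) := by
    have hS : ((Finset.univ : Finset (Fin N)).card : ℝ) * (1 / K)
        ≤ ∑ i, (V i (X L)).toReal := by
      have : (1 / (K:ℝ)) * N ≤ ∑ i, (V i (X L)).toReal := by
        rw [ge_iff_le, le_div_iff₀ hNpos] at hlast
        linarith
      simp only [Finset.card_univ, Fintype.card_fin]
      linarith [this]
    intro i
    exact all_eq_of_sum_ge Finset.univ _ _ (fun i _ => hlast_le i) hS i (Finset.mem_univ i)
  -- equality for the other pieces
  intro i j
  by_cases hj : j = L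
  · rw [hj]; exact hlast_eq i
  · have hge : ∀ j' ∈ Finset.univ.erase L, 1 / (K:ℝ) ≤ (V i (X j')).toReal := by
      intro j' hj'
      exact hfirst i j' (hne_iff j' (Finset.ne_of_mem_erase hj'))
    have hub : ∑ j' ∈ Finset.univ.erase L, (V i (X j')).toReal
        ≤ ((Finset.univ.erase L).card : ℝ) * (1 / K) := by
      have h1 := hsplit i
      have h2 := hlast_eq i
      rw [hcard]
      have hK1 : ((K:ℝ) - 1) * (1 / K) = 1 - 1 / K := by field_simp
      linarith
    exact all_eq_of_sum_le _ _ _ hge hub j (Finset.mem_erase.mpr ⟨hj, Finset.mem_univ j⟩)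
end

section
/- Given an exact division of [0,1] into k pieces each valued exactly 1/k by n-1 of n agents, there exists an assignment of pieces to the k families (n agents grouped arbitrarily into k families with equal entitlements) that is unanimous-proportional: every agent values his family's piece at least 1/k. -/
open MeasureTheory Set

/-- from an exact division for agents 1..n-1, an assignment of the
k pieces to the k families exists that is unanimous-proportional. -/
theorem exact_implies_unanimous
    (n k : ℕ) (hn : 1 ≤ n) (hk : 1 ≤ k)
    (V : Fin n → Measure ℝ)
    (hprob : ∀ i, IsProbabilityMeasure (V i))
    (hsupp : ∀ i, V i (Icc (0:ℝ) 1) = 1)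
    (hac : ∀ i, V i ≪ volume)
    (f : Fin n → Fin k)  -- grouping of agents into families
    (X : Fin k → Set ℝ)
    (hmeas : ∀ j, MeasurableSet (X j))
    (hdisj : Pairwise (Function.onFun Disjoint X))
    (hcover : (⋃ j, X j) = Icc (0:ℝ) 1)
    -- exact division for the first n-1 agents:
    (hexact : ∀ (i : Fin n) (j : Fin k), (i : ℕ) < n - 1 → (V i (X j)).toReal = 1 / (k : ℝ)) :
    ∃ σ : Equiv.Perm (Fin k),
      ∀ i : Fin n, (V i (X (σ (f i)))).toReal ≥ 1 / (k : ℝ) := by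
  have hkpos : (0:ℝ) < k := by exact_mod_cast hk
  set last : Fin n := ⟨n - 1, by omega⟩ with hlast
  -- sum of last agent's values over pieces is 1
  have hsum : ∑ j, (V last (X j)).toReal = 1 := by
    have h1 : V last (⋃ j, X j) = ∑' j, V last (X j) :=
      measure_iUnion hdisj hmeas
    rw [hcover, hsupp, tsum_fintype] at h1
    have h2 : ((1:ENNReal)).toReal = (∑ j, V last (X j)).toReal := by rw [← h1]
    rw [ENNReal.toReal_sum (fun j _ => measure_ne_top _ _)] at h2
    simpa using h2.symm
  -- pigeonhole: some piece has value ≥ 1/k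
  have hpig : ∃ j₀ : Fin k, 1 / (k:ℝ) ≤ (V last (X j₀)).toReal := by
    have hne : (Finset.univ : Finset (Fin k)).Nonempty := by
      have : NeZero k := ⟨by omega⟩
      exact Finset.univ_nonempty
    have hle : ∑ _j : Fin k, 1 / (k:ℝ) ≤ ∑ j, (V last (X j)).toReal := by
      rw [hsum, Finset.sum_const, Finset.card_univ, Fintype.card_fin]
      rw [nsmul_eq_mul]
      field_simp
      exact le_rfl
    obtain ⟨j₀, _, hj₀⟩ := Finset.exists_le_of_sum_le hne hle
    exact ⟨j₀, hj₀⟩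
  obtain ⟨j₀, hj₀⟩ := hpig
  refine ⟨Equiv.swap (f last) j₀, fun i => ?_⟩
  rcases lt_or_ge (i : ℕ) (n - 1) with h | h
  · exact ge_of_eq (hexact i _ h)
  · have : i = last := by
      apply Fin.ext
      have := i.isLt
      simp only [hlast]
      omega
    subst this
    simpa [Equiv.swap_apply_left] using hj₀
end

section
/- For every N >= 1 and K >= 2 there exist n = N(K-1)+1 additive nonatomic probability measures on [0,1] and a grouping into K equal-entitlement families such that every unanimous-proportional allocation into finite unions of intervals has at least n connected components. -/
open MeasureTheory Set

lemma succ_mod_ne (K i : ℕ) (hK : 2 ≤ K) : (i+1) % K ≠ i % K := by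
  intro h
  have h2 : (K:ℤ) ∣ (i:ℤ) - (i+1) := (Nat.modEq_iff_dvd).mp h
  have h3 : (K:ℤ) ∣ 1 := by
    have he : ((i:ℤ) - (i+1)) = -1 := by ring
    rw [he] at h2; exact (dvd_neg.mp h2)
  have := Int.le_of_dvd one_pos h3
  omega

/-- lower bound of n = N(K-1)+1 components for unanimous
proportionality. -/
theorem unanimous_proportional_lower_bound (N K : ℕ) (hN : 1 ≤ N) (hK : 2 ≤ K) :
    ∃ (V : Fin (N * (K - 1) + 1) → Measure ℝ) (f : Fin (N * (K - 1) + 1) → Fin K),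
      (∀ i, IsProbabilityMeasure (V i)) ∧
      (∀ i, V i (Icc (0:ℝ) 1) = 1) ∧
      (∀ i, V i ≪ volume) ∧
      ∀ (X : Fin K → Set ℝ) (m : Fin K → ℕ),
        (∀ j, IsUnionOfIntervals (X j) (m j)) →
        Pairwise (Function.onFun Disjoint X) →
        (⋃ j, X j) = Icc (0:ℝ) 1 →
        (∀ i, (V i (X (f i))).toReal ≥ 1 / (K : ℝ)) →
        N * (K - 1) + 1 ≤ ∑ j, m j := by
  set n : ℕ := N * (K - 1) + 1 with hn
  have hn0 : 0 < n := Nat.succ_pos _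
  have hnR : (0:ℝ) < n := by exact_mod_cast hn0
  have hK0 : 0 < K := by omega
  -- the intervals
  set J : Fin n → Set ℝ := fun i => Icc ((i:ℕ)/(n:ℝ)) (((i:ℕ)+1)/(n:ℝ)) with hJ
  have hlen : ∀ i : Fin n, volume (J i) = ENNReal.ofReal (1/(n:ℝ)) := by
    intro i
    rw [hJ]
    simp only [Real.volume_Icc]
    congr 1
    field_simp
    ring
  have hmul : (n : ENNReal) * ENNReal.ofReal (1/(n:ℝ)) = 1 := by
    rw [one_div, ENNReal.ofReal_inv_of_pos hnR, ENNReal.ofReal_natCast]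
    exact ENNReal.mul_inv_cancel (by exact_mod_cast hn0.ne') (ENNReal.natCast_ne_top n)
  refine ⟨fun i => (n : ENNReal) • volume.restrict (J i),
    fun i => ⟨(i:ℕ) % K, Nat.mod_lt _ hK0⟩, ?_, ?_, ?_, ?_⟩
  · -- probability measures
    intro i
    constructor
    rw [Measure.smul_apply, smul_eq_mul, Measure.restrict_apply MeasurableSet.univ,
      Set.univ_inter, hlen i, hmul]
  · -- measure of [0,1] is 1
    intro i
    have hsub : J i ⊆ Icc (0:ℝ) 1 := by
      apply Icc_subset_Icc
      · positivity
      · rw [div_le_one hnR]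
        have : (i:ℕ) + 1 ≤ n := i.isLt
        exact_mod_cast this
    rw [Measure.smul_apply, smul_eq_mul, Measure.restrict_apply measurableSet_Icc,
      Set.inter_eq_self_of_subset_right hsub, hlen i, hmul]
  · -- absolute continuity
    intro i s hs
    rw [Measure.smul_apply, smul_eq_mul]
    have h0 : volume.restrict (J i) s = 0 :=
      le_antisymm (le_trans (Measure.restrict_le_self s) hs.le) zero_le
    rw [h0, mul_zero]
  · -- main lower bound
    intro X m hXI hdisj hcover hprop
    set f : Fin n → Fin K := fun i => ⟨(i:ℕ) % K, Nat.mod_lt _ hK0⟩ with hf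
    choose I hIconn hIeq using hXI
    -- each agent gets a point in the open interior of its interval
    have key : ∀ i : Fin n, ∃ x, x ∈ X (f i) ∧ x ∈ Ioo ((i:ℕ)/(n:ℝ)) (((i:ℕ)+1)/(n:ℝ)) := by
      intro i
      have hp := hprop i
      have hKpos : (0:ℝ) < 1 / K := by positivity
      have hne : ((n : ENNReal) • volume.restrict (J i)) (X (f i)) ≠ 0 := by
        intro h0
        rw [h0] at hp
        simp at hp
        linarith
      rw [Measure.smul_apply, smul_eq_mul, Measure.restrict_apply' measurableSet_Icc] at hne
      have hvol : volume (X (f i) ∩ J i) ≠ 0 := by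
        intro h0; exact hne (by rw [h0, mul_zero])
      have : (X (f i) ∩ Ioo ((i:ℕ)/(n:ℝ)) (((i:ℕ)+1)/(n:ℝ))).Nonempty := by
        apply MeasureTheory.nonempty_of_measure_ne_zero (μ := volume)
        intro h0
        apply hvol
        set a := ((i:ℕ):ℝ)/(n:ℝ); set b := (((i:ℕ):ℝ)+1)/(n:ℝ)
        have hsub : X (f i) ∩ J i ⊆ (X (f i) ∩ Ioo a b) ∪ {a, b} := by
          rintro x ⟨hxS, hxa, hxb⟩
          rcases eq_or_lt_of_le hxa with rfl | ha'
          · exact Or.inr (Or.inl rfl)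
          rcases eq_or_lt_of_le hxb with rfl | hb'
          · exact Or.inr (Or.inr rfl)
          exact Or.inl ⟨hxS, ha', hb'⟩
        refine measure_mono_null hsub (measure_union_null h0 ?_)
        exact (Set.toFinite ({a,b} : Set ℝ)).measure_zero _
      obtain ⟨x, hx1, hx2⟩ := this
      exact ⟨x, hx1, hx2⟩
    -- pick component for each agent
    have key2 : ∀ i : Fin n, ∃ (c : Fin (m (f i))) (x : ℝ),
        x ∈ I (f i) c ∧ x ∈ Ioo ((i:ℕ)/(n:ℝ)) (((i:ℕ)+1)/(n:ℝ)) := by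
      intro i
      obtain ⟨x, hx1, hx2⟩ := key i
      rw [hIeq (f i)] at hx1
      obtain ⟨c, hc⟩ := Set.mem_iUnion.mp hx1
      exact ⟨c, x, hc, hx2⟩
    choose c x hxI hxIoo using key2
    -- the counting injection
    set g : Fin n → Σ j : Fin K, Fin (m j) := fun i => ⟨f i, c i⟩ with hg
    have aux : ∀ i i' : Fin n, (i:ℕ) < (i':ℕ) → g i = g i' → False := by
      intro i i' hlt hgg
      have hfj : f i = f i' := congrArg Sigma.fst hgg
      have hmod : (i:ℕ) % K = (i':ℕ) % K := congrArg Fin.val hfj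
      have hTeq : I (f i) (c i) = I (f i') (c i') := by
        have := congrArg (fun p : Σ j : Fin K, Fin (m j) => I p.1 p.2) hgg
        simpa using this
      -- adjacent case impossible
      have hadj : (i:ℕ) + 1 < (i':ℕ) := by
        rcases Nat.lt_or_ge ((i:ℕ)+1) (i':ℕ) with h | h
        · exact h
        · exfalso
          have : (i':ℕ) = (i:ℕ) + 1 := by omega
          rw [this] at hmod
          exact succ_mod_ne K (i:ℕ) hK hmod.symm
      -- intermediate agent
      have htlt : (i:ℕ) + 1 < n := lt_of_lt_of_le hadj (Nat.le_of_lt i'.isLt)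
      set t : Fin n := ⟨(i:ℕ)+1, htlt⟩ with ht
      have hft : f t ≠ f i := by
        intro hh
        have : ((i:ℕ)+1) % K = (i:ℕ) % K := congrArg Fin.val hh
        exact succ_mod_ne K (i:ℕ) hK this
      -- x t lies inside I (f i) (c i) ⊆ X (f i)
      have hxi_lt : x i < (((i:ℕ):ℝ)+1)/(n:ℝ) := (hxIoo i).2
      have hxi'_gt : (((i':ℕ):ℝ))/(n:ℝ) < x i' := (hxIoo i').1
      have hb2 : (((i:ℕ):ℝ)+2)/(n:ℝ) ≤ ((i':ℕ):ℝ)/(n:ℝ) := by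
        have h2 : ((i:ℕ):ℝ) + 2 ≤ ((i':ℕ):ℝ) := by exact_mod_cast hadj
        gcongr
      have hxt_mem : x t ∈ Icc (x i) (x i') := by
        have h1 := (hxIoo t).1
        have h2 := (hxIoo t).2
        have htv : ((t:ℕ):ℝ) = ((i:ℕ):ℝ) + 1 := by rw [ht]; push_cast; ring
        rw [htv] at h1 h2
        constructor
        · exact le_of_lt (lt_trans hxi_lt h1)
        · refine le_of_lt (lt_trans h2 ?_)
          refine lt_of_le_of_lt ?_ hxi'_gt
          calc (((i:ℕ):ℝ) + 1 + 1)/(n:ℝ) = (((i:ℕ):ℝ)+2)/(n:ℝ) := by ring_nf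
            _ ≤ ((i':ℕ):ℝ)/(n:ℝ) := hb2
      have hxt_in_T : x t ∈ I (f i) (c i) := by
        have hsub := (hIconn (f i) (c i)).out (hxI i) (by rw [hTeq]; exact hxI i')
        exact hsub hxt_mem
      have hxt_in_Xfi : x t ∈ X (f i) := by
        rw [hIeq (f i)]
        exact Set.mem_iUnion.mpr ⟨c i, hxt_in_T⟩
      have hxt_in_Xft : x t ∈ X (f t) := by
        rw [hIeq (f t)]
        exact Set.mem_iUnion.mpr ⟨c t, hxI t⟩
      exact (hdisj hft).le_bot ⟨hxt_in_Xft, hxt_in_Xfi⟩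
    have ginj : Function.Injective g := by
      intro i i' hgg
      by_contra hne
      have : (i:ℕ) ≠ (i':ℕ) := fun h => hne (Fin.ext h)
      rcases Nat.lt_or_ge (i:ℕ) (i':ℕ) with h | h
      · exact aux i i' h hgg
      · exact aux i' i (by omega) hgg.symm
    have := Fintype.card_le_of_injective g ginj
    simpa [Fintype.card_sigma] using this
end

section
/- For k = 2 families with equal entitlements, there exists a connected democratic-proportional allocation: a cut point M* in [0,1] such that at least half the members of family 1 value [0,M*] (or [M*,1], according to the assignment) at least 1/2, and at least half the members of family 2 value the other interval at least 1/2. -/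
open MeasureTheory Set
open scoped Classical

open scoped ENNReal

lemma median_measure (V : Measure ℝ) [IsProbabilityMeasure V] (hsupp : V (Icc 0 1) = 1) :
    ∃ m ∈ Icc (0:ℝ) 1, 1/2 ≤ V (Icc 0 m) ∧ 1/2 ≤ V (Icc m 1) := by
  set A : Set ℝ := {x | x ∈ Icc (0:ℝ) 1 ∧ 1/2 ≤ V (Icc 0 x)} with hA
  have h1A : (1:ℝ) ∈ A := ⟨⟨zero_le_one, le_refl 1⟩, by rw [hsupp]; norm_num⟩
  have hbdd : BddBelow A := ⟨0, fun x hx => hx.1.1⟩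
  set m := sInf A with hmdef
  have hm0 : 0 ≤ m := le_csInf ⟨1, h1A⟩ fun x hx => hx.1.1
  have hm1 : m ≤ 1 := csInf_le hbdd h1A
  refine ⟨m, ⟨hm0, hm1⟩, ?_, ?_⟩
  · -- V (Icc 0 m) ≥ 1/2
    have hx : ∀ k : ℕ, ∃ x ∈ A, x < m + 1/(k+1) := by
      intro k
      apply exists_lt_of_csInf_lt ⟨1, h1A⟩
      have : (0:ℝ) < 1/(k+1) := by positivity
      linarith
    choose x hxA hxlt using hx
    set y : ℕ → ℝ := fun k => (Finset.range (k+1)).inf' (by simp) x with hy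
    have hyA : ∀ k, y k ∈ A := by
      intro k
      obtain ⟨i, _, hi⟩ := Finset.exists_mem_eq_inf' (s := Finset.range (k+1)) (by simp) x
      show (Finset.range (k+1)).inf' (by simp) x ∈ A
      rw [hi]; exact hxA i
    have hyanti : Antitone y := by
      intro a b hab
      simp only [hy]
      gcongr
    have hym : ∀ k, m ≤ y k := fun k => csInf_le_of_le hbdd (hyA k) le_rfl
    have hylt : ∀ k, y k < m + 1/(k+1) :=
      fun k => lt_of_le_of_lt (Finset.inf'_le x (by simp : k ∈ Finset.range (k+1))) (hxlt k)
    have hicc : Icc (0:ℝ) m = ⋂ k, Icc 0 (y k) := by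
      ext z
      simp only [mem_iInter, mem_Icc]
      constructor
      · intro ⟨h0, hzm⟩ k; exact ⟨h0, hzm.trans (hym k)⟩
      · intro h
        refine ⟨(h 0).1, ?_⟩
        by_contra hzm
        push_neg at hzm
        obtain ⟨k, hk⟩ := exists_nat_one_div_lt (show (0:ℝ) < z - m by linarith)
        have := (h k).2
        have := hylt k
        linarith
    have := Directed.measure_iInter (μ := V) (s := fun k => Icc 0 (y k))
      (fun k => measurableSet_Icc.nullMeasurableSet)
      (fun a b => ⟨max a b, Icc_subset_Icc le_rfl (hyanti (le_max_left a b)),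
        Icc_subset_Icc le_rfl (hyanti (le_max_right a b))⟩)
      ⟨0, measure_ne_top _ _⟩
    rw [hicc, this]
    exact le_iInf fun k => (hyA k).2
  · -- V (Icc m 1) ≥ 1/2
    have hIco : V (Ico 0 m) ≤ 1/2 := by
      have hIco_eq : Ico (0:ℝ) m = ⋃ k : ℕ, Icc 0 (m - 1/(k+1)) := by
        ext z
        simp only [mem_iUnion, mem_Icc, mem_Ico]
        constructor
        · intro ⟨h0, hzm⟩
          obtain ⟨k, hk⟩ := exists_nat_one_div_lt (show (0:ℝ) < m - z by linarith)
          exact ⟨k, h0, by linarith⟩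
        · intro ⟨k, h0, hzk⟩
          have : (0:ℝ) < 1/(k+1) := by positivity
          exact ⟨h0, by linarith⟩
      have hmono : Monotone (fun k : ℕ => Icc (0:ℝ) (m - 1/(k+1))) := by
        intro a b hab
        apply Icc_subset_Icc le_rfl
        have ha : (0:ℝ) < (a:ℝ)+1 := by positivity
        have hb : (0:ℝ) < (b:ℝ)+1 := by positivity
        have : (1:ℝ)/(b+1) ≤ 1/(a+1) := by
          apply one_div_le_one_div_of_le ha
          exact_mod_cast by omega
        linarith
      rw [hIco_eq, hmono.measure_iUnion]
      apply iSup_le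
      intro k
      rcases le_or_gt 0 (m - 1/(k+1)) with h0 | h0
      · have hnot : (m - 1/(k+1)) ∉ A := by
          apply notMem_of_lt_csInf _ hbdd
          have : (0:ℝ) < 1/(k+1) := by positivity
          linarith
        have hin : (m - 1/(k+1)) ∈ Icc (0:ℝ) 1 := ⟨h0, by
          have : (0:ℝ) < 1/(k+1) := by positivity
          linarith⟩
        have : ¬ (1/2 ≤ V (Icc 0 (m - 1/(k+1)))) := fun h => hnot ⟨hin, h⟩
        exact le_of_lt (not_le.mp this)
      · rw [Icc_eq_empty (by linarith)]
        simp
    have hsplit : V (Icc 0 1) ≤ V (Ico 0 m) + V (Icc m 1) := by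
      refine le_trans (measure_mono ?_) (measure_union_le _ _)
      rintro z ⟨h0, h1⟩
      rcases lt_or_ge z m with h | h
      · exact Or.inl ⟨h0, h⟩
      · exact Or.inr ⟨h, h1⟩
    rw [hsupp] at hsplit
    have h1 : (1:ℝ≥0∞) ≤ 1/2 + V (Icc m 1) := hsplit.trans (by gcongr)
    have h2 : (1:ℝ≥0∞)/2 + 1/2 ≤ 1/2 + V (Icc m 1) := by
      rwa [ENNReal.add_halves]
    exact (ENNReal.add_le_add_iff_left (by norm_num)).mp h2

lemma finset_median {ι : Type*} [DecidableEq ι] (S : Finset ι) (m : ι → ℝ)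
    (hm : ∀ i ∈ S, m i ∈ Icc (0:ℝ) 1) :
    ∃ M ∈ Icc (0:ℝ) 1,
      S.card ≤ 2 * (S.filter fun i => m i ≤ M).card ∧
      S.card ≤ 2 * (S.filter fun i => M ≤ m i).card := by
  rcases S.eq_empty_or_nonempty with rfl | hS
  · exact ⟨0, ⟨le_refl 0, zero_le_one⟩, by simp, by simp⟩
  set T := S.image m with hT
  have hTne : T.Nonempty := hS.image m
  set good := T.filter (fun M => S.card ≤ 2 * (S.filter fun i => m i ≤ M).card) with hgood
  have hmaxgood : T.max' hTne ∈ good := by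
    refine Finset.mem_filter.mpr ⟨T.max'_mem hTne, ?_⟩
    have heq : S.filter (fun i => m i ≤ T.max' hTne) = S :=
      Finset.filter_true_of_mem (fun i hi => Finset.le_max' T _ (Finset.mem_image_of_mem m hi))
    rw [heq]; omega
  have hgoodne : good.Nonempty := ⟨_, hmaxgood⟩
  set M := good.min' hgoodne with hM
  have hMgood : M ∈ good := Finset.min'_mem _ _
  have hMT : M ∈ T := (Finset.mem_filter.mp hMgood).1
  obtain ⟨iM, hiM, hMeq⟩ := Finset.mem_image.mp hMT
  refine ⟨M, hMeq ▸ hm iM hiM, (Finset.mem_filter.mp hMgood).2, ?_⟩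
  have hsplit := Finset.card_filter_add_card_filter_not
    (s := S) (p := fun i => M ≤ m i)
  simp only [not_le] at hsplit
  suffices h : 2 * (S.filter fun i => m i < M).card ≤ S.card by omega
  by_contra hlt
  push_neg at hlt
  have hScard : 1 ≤ S.card := Finset.card_pos.mpr hS
  have hne : (S.filter fun i => m i < M).Nonempty := by
    rw [← Finset.card_pos]; omega
  obtain ⟨i0, hi0⟩ := hne
  set T' := T.filter (fun x => x < M) with hT'
  have hT'ne : T'.Nonempty :=
    ⟨m i0, Finset.mem_filter.mpr ⟨Finset.mem_image_of_mem m (Finset.mem_filter.mp hi0).1,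
      (Finset.mem_filter.mp hi0).2⟩⟩
  set M' := T'.max' hT'ne with hM'
  have hM'mem := Finset.mem_filter.mp (T'.max'_mem hT'ne)
  have hM'lt : M' < M := hM'mem.2
  have hsub : (S.filter fun i => m i < M) ⊆ (S.filter fun i => m i ≤ M') := by
    intro i hi
    obtain ⟨hiS, hilt⟩ := Finset.mem_filter.mp hi
    exact Finset.mem_filter.mpr ⟨hiS, Finset.le_max' T' _
      (Finset.mem_filter.mpr ⟨Finset.mem_image_of_mem m hiS, hilt⟩)⟩
  have hM'good : M' ∈ good := Finset.mem_filter.mpr ⟨hM'mem.1, by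
    have := Finset.card_le_card hsub; omega⟩
  exact absurd (Finset.min'_le good M' hM'good) (not_le.mpr hM'lt)

lemma half_le_toReal {a : ℝ≥0∞} (ha : a ≠ ⊤) (h : 1/2 ≤ a) : (1:ℝ)/2 ≤ a.toReal := by
  have := ENNReal.toReal_mono ha h
  simpa using this

/-- for two families with equal entitlements there is a connected
democratic-proportional allocation: the cake is cut at a single point and each
family gets one of the two intervals, such that in each family at least half
the members value their family's interval at least 1/2. -/
theorem democratic_proportional_two_families_connected
    (n : ℕ) (hn : 1 ≤ n)
    (V : Fin n → Measure ℝ)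
    (hprob : ∀ i, IsProbabilityMeasure (V i))
    (hsupp : ∀ i, V i (Icc (0:ℝ) 1) = 1)
    (hac : ∀ i, V i ≪ volume)
    (f : Fin n → Fin 2) :
    ∃ M ∈ Icc (0:ℝ) 1, ∃ σ : Equiv.Perm (Fin 2),
      ∀ j : Fin 2,
        let X : Fin 2 → Set ℝ := fun j' => if σ j' = 0 then Icc 0 M else Icc M 1
        2 * (Finset.univ.filter
              (fun i : Fin n => f i = j ∧ 1 / 2 ≤ (V i (X j)).toReal)).card ≥
          (Finset.univ.filter (fun i : Fin n => f i = j)).card := by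
  have key : ∀ i, ∃ m ∈ Icc (0:ℝ) 1, 1/2 ≤ V i (Icc 0 m) ∧ 1/2 ≤ V i (Icc m 1) := by
    intro i
    haveI := hprob i
    exact median_measure (V i) (hsupp i)
  choose m hm01 hmL hmR using key
  obtain ⟨M0, hM0, hc0L, hc0R⟩ :=
    finset_median (Finset.univ.filter fun i => f i = 0) m (fun i _ => hm01 i)
  obtain ⟨M1, hM1, hc1L, hc1R⟩ :=
    finset_median (Finset.univ.filter fun i => f i = 1) m (fun i _ => hm01 i)
  -- helper: left interval
  have left : ∀ (M' M : ℝ), M' ≤ M → ∀ j : Fin 2,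
      (Finset.univ.filter fun i => f i = j).card ≤
        2 * ((Finset.univ.filter fun i => f i = j).filter fun i => m i ≤ M').card →
      (Finset.univ.filter fun i : Fin n => f i = j).card ≤
        2 * (Finset.univ.filter fun i : Fin n =>
              f i = j ∧ 1 / 2 ≤ (V i (Icc 0 M)).toReal).card := by
    intro M' M hM'M j h
    refine h.trans (Nat.mul_le_mul_left 2 (Finset.card_le_card ?_))
    rw [Finset.filter_filter]
    apply Finset.monotone_filter_right
    rintro i - ⟨hfi, hmi⟩
    haveI := hprob i
    refine ⟨hfi, half_le_toReal (measure_ne_top _ _) ?_⟩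
    exact (hmL i).trans (measure_mono (Icc_subset_Icc le_rfl (hmi.trans hM'M)))
  have right : ∀ (M M' : ℝ), M ≤ M' → ∀ j : Fin 2,
      (Finset.univ.filter fun i => f i = j).card ≤
        2 * ((Finset.univ.filter fun i => f i = j).filter fun i => M' ≤ m i).card →
      (Finset.univ.filter fun i : Fin n => f i = j).card ≤
        2 * (Finset.univ.filter fun i : Fin n =>
              f i = j ∧ 1 / 2 ≤ (V i (Icc M 1)).toReal).card := by
    intro M M' hMM' j h
    refine h.trans (Nat.mul_le_mul_left 2 (Finset.card_le_card ?_))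
    rw [Finset.filter_filter]
    apply Finset.monotone_filter_right
    rintro i - ⟨hfi, hmi⟩
    haveI := hprob i
    refine ⟨hfi, half_le_toReal (measure_ne_top _ _) ?_⟩
    exact (hmR i).trans (measure_mono (Icc_subset_Icc (hMM'.trans hmi) le_rfl))
  rcases le_or_gt M0 M1 with hcase | hcase
  · refine ⟨M0, hM0, Equiv.refl _, ?_⟩
    intro j
    by_cases hj : j = 0
    · subst hj
      simp only [Equiv.refl_apply, if_pos rfl]
      exact left M0 M0 le_rfl 0 hc0L
    · have hj1 : j = 1 := by omega
      subst hj1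
      simp only [Equiv.refl_apply, if_neg (show (1 : Fin 2) ≠ 0 by decide)]
      exact right M0 M1 hcase 1 hc1R
  · refine ⟨M1, hM1, Equiv.swap 0 1, ?_⟩
    intro j
    by_cases hj : j = 0
    · subst hj
      simp only [Equiv.swap_apply_left, if_neg (show (1 : Fin 2) ≠ 0 by decide)]
      exact right M1 M0 hcase.le 0 hc0R
    · have hj1 : j = 1 := by omega
      subst hj1
      simp only [Equiv.swap_apply_right, if_pos rfl]
      exact left M1 M1 le_rfl 1 hc1L
end

section
/- For all integers k >= 2, m >= 1, q <= m, there exist n = mk additive nonatomic probability measures on [0,mk], grouped into k families of m members each, such that any allocation (into finite unions of intervals) in which at least q members of each family assign positive value to their family's piece has at least k * (kq - m)/(k-1) connected components. -/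
open MeasureTheory Set
open scoped Classical

/-- If `a < b`, `a % k = b % k`, then `a + k ≤ b`. -/
lemma mod_gap {k a b : ℕ} (hk : 1 ≤ k) (h : a % k = b % k) (hab : a < b) :
    a + k ≤ b := by
  have hdvd : k ∣ b - a := (Nat.modEq_iff_dvd' hab.le).mp h
  have := Nat.le_of_dvd (by omega) hdvd
  omega

/-- Key combinatorial lemma: per-family lower bound on blocked cells. -/
lemma family_bound (N k c j : ℕ) (hk : 1 ≤ k) (I : Fin c → Set ℝ)
    (hI : ∀ r, (I r).OrdConnected)
    (P : Finset (Fin N))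
    (hP : ∀ a ∈ P, a.val % k = j)
    (hpos : ∀ a ∈ P, ∃ r, (I r ∩ Ioo (a.val : ℝ) (a.val + 1)).Nonempty) :
    ∃ B : Finset (Fin N),
      (∀ b ∈ B, b.val % k ≠ j ∧ Ioo (b.val : ℝ) (b.val + 1) ⊆ ⋃ r, I r) ∧
      (k - 1) * P.card ≤ (k - 1) * c + B.card := by
  rcases P.eq_empty_or_nonempty with hPe | hPne
  · exact ⟨∅, by simp, by simp [hPe]⟩
  have hc : 0 < c := by
    obtain ⟨a, ha⟩ := hPne
    obtain ⟨r, -⟩ := hpos a ha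
    exact r.pos
  -- choice of a positively-intersected interval for each member
  have hg : ∀ a : Fin N, ∃ r : Fin c,
      a ∈ P → (I r ∩ Ioo (a.val : ℝ) (a.val + 1)).Nonempty := by
    intro a
    by_cases h : a ∈ P
    · obtain ⟨r, hr⟩ := hpos a h; exact ⟨r, fun _ => hr⟩
    · exact ⟨⟨0, hc⟩, fun h' => absurd h' h⟩
  choose g hgp using hg
  set M := P.max' hPne with hM
  have hMP : M ∈ P := P.max'_mem hPne
  -- successor function inside P
  set nxt : Fin N → Fin N := fun a =>
    if h : (P.filter (fun b => a < b)).Nonempty then (P.filter (fun b => a < b)).min' h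
    else a with hnxt
  have hfilne : ∀ a ∈ P.erase M, (P.filter (fun b => a < b)).Nonempty := by
    intro a ha
    refine ⟨M, Finset.mem_filter.mpr ⟨hMP, ?_⟩⟩
    have h1 := P.le_max' a (Finset.mem_of_mem_erase ha)
    have h2 : a ≠ M := Finset.ne_of_mem_erase ha
    exact lt_of_le_of_ne h1 h2
  have hnxtP : ∀ a ∈ P.erase M, nxt a ∈ P := by
    intro a ha
    simp only [hnxt, dif_pos (hfilne a ha)]
    exact Finset.mem_of_mem_filter _ (Finset.min'_mem _ _)
  have hnxtlt : ∀ a ∈ P.erase M, a < nxt a := by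
    intro a ha
    simp only [hnxt, dif_pos (hfilne a ha)]
    exact (Finset.mem_filter.mp (Finset.min'_mem _ _)).2
  have hnxtle : ∀ a ∈ P.erase M, ∀ b ∈ P, a < b → nxt a ≤ b := by
    intro a ha b hb hab
    simp only [hnxt, dif_pos (hfilne a ha)]
    exact Finset.min'_le _ _ (Finset.mem_filter.mpr ⟨hb, hab⟩)
  have hgap : ∀ a ∈ P.erase M, a.val + k ≤ (nxt a).val := by
    intro a ha
    exact mod_gap hk
      ((hP a (Finset.mem_of_mem_erase ha)).trans (hP _ (hnxtP a ha)).symm)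
      (hnxtlt a ha)
  -- covered gaps
  set covered : Fin N → Prop := fun a =>
    ∃ r, (∃ x ∈ P, g x = r ∧ x ≤ a) ∧ (∃ y ∈ P, g y = r ∧ nxt a ≤ y) with hcov
  set C := (P.erase M).filter covered with hC
  set U := (P.erase M).filter (fun a => ¬ covered a) with hU
  -- uncovered gaps: g is injective on U ∪ {M}
  have key : ∀ a ∈ U, ∀ b ∈ P, a < b → g a ≠ g b := by
    intro a ha b hb hab heq
    have haE : a ∈ P.erase M := Finset.mem_of_mem_filter _ ha
    have hnc : ¬ covered a := (Finset.mem_filter.mp ha).2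
    exact hnc ⟨g a, ⟨a, Finset.mem_of_mem_erase haE, rfl, le_rfl⟩,
      ⟨b, hb, heq.symm, hnxtle a haE b hb hab⟩⟩
  have hUsub : U ⊆ P.erase M := Finset.filter_subset _ _
  have hMnotU : M ∉ U := fun h => (Finset.ne_of_mem_erase (hUsub h)) rfl
  have hinj : Set.InjOn g (insert M U : Finset (Fin N)) := by
    intro x hx y hy hgxy
    simp only [Finset.coe_insert, Set.mem_insert_iff, Finset.mem_coe] at hx hy
    by_contra hne
    have hux : ∀ u ∈ U, ∀ v, (v = M ∨ v ∈ U) → u ≠ v → g u = g v → False := by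
      intro u hu v hv huv hguv
      have huE := hUsub hu
      have huP := Finset.mem_of_mem_erase huE
      rcases hv with rfl | hvU
      · exact key u hu M hMP (lt_of_le_of_ne (P.le_max' u huP) (Finset.ne_of_mem_erase huE)) hguv
      · have hvP := Finset.mem_of_mem_erase (hUsub hvU)
        rcases lt_trichotomy u v with h | h | h
        · exact key u hu v hvP h hguv
        · exact huv h
        · exact key v hvU u huP h hguv.symm
    rcases hx with rfl | hxU
    · rcases hy with rfl | hyU
      · exact hne rfl
      · exact hux y hyU M (Or.inl rfl) (Ne.symm hne) hgxy.symm
    · exact hux x hxU y hy hne hgxy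
  have hUcard : U.card + 1 ≤ c := by
    have h1 : (insert M U).card ≤ c := by
      have := Finset.card_le_card_of_injOn g
        (fun a _ => Finset.mem_univ (g a)) hinj
      simpa using this
    rw [Finset.card_insert_of_notMem hMnotU] at h1
    omega
  -- the blocked cells
  set blk : Fin N → Finset (Fin N) := fun a =>
    Finset.univ.filter (fun b => a.val < b.val ∧ b.val < a.val + k) with hblk
  set B := C.biUnion blk with hB
  have hCsub : C ⊆ P.erase M := Finset.filter_subset _ _
  refine ⟨B, ?_, ?_⟩
  · intro b hb
    obtain ⟨a, haC, hbblk⟩ := Finset.mem_biUnion.mp hb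
    have hbr := (Finset.mem_filter.mp hbblk).2
    have haE := hCsub haC
    have haP := Finset.mem_of_mem_erase haE
    constructor
    · intro hbj
      have := mod_gap hk ((hP a haP).trans hbj.symm) hbr.1
      omega
    · -- covered: find the spanning interval
      have hcova : covered a := (Finset.mem_filter.mp haC).2
      obtain ⟨r, ⟨x, hx, hgx, hxa⟩, ⟨y, hy, hgy, hny⟩⟩ := hcova
      obtain ⟨p, hpI, hpx⟩ := by
        have := hgp x hx; rwa [hgx] at this
      obtain ⟨p', hpI', hpy⟩ := by
        have := hgp y hy; rwa [hgy] at this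
      have hgapa := hgap a haE
      intro z hz
      refine Set.mem_iUnion.mpr ⟨r, (hI r).out hpI hpI' ⟨?_, ?_⟩⟩
      · -- p ≤ z
        have h1 : p < (x.val : ℝ) + 1 := hpx.2
        have h2 : (x.val : ℝ) + 1 ≤ (b.val : ℝ) := by
          have : x.val + 1 ≤ b.val := by
            have : x.val ≤ a.val := hxa
            omega
          exact_mod_cast this
        have := hz.1
        linarith
      · -- z ≤ p'
        have h1 : (y.val : ℝ) < p' := hpy.1
        have h2 : (b.val : ℝ) + 1 ≤ (y.val : ℝ) := by
          have : b.val + 1 ≤ y.val := by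
            have hle : (nxt a).val ≤ y.val := hny
            omega
          exact_mod_cast this
        have := hz.2
        linarith
  · -- cardinality bound
    have hdisj : ∀ x ∈ C, ∀ y ∈ C, x ≠ y → Disjoint (blk x) (blk y) := by
      intro x hx y hy hxy
      rw [Finset.disjoint_left]
      intro b hbx hby
      have h1 := (Finset.mem_filter.mp hbx).2
      have h2 := (Finset.mem_filter.mp hby).2
      have hcase : ∀ u, (hu : u ∈ C) → ∀ v, (hv : v ∈ C) → u < v →
          u.val < b.val → b.val < u.val + k → v.val < b.val → False := by
        intro u hu v hv huv hb1 hb2 hb3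
        have hvP := Finset.mem_of_mem_erase (hCsub hv)
        have hnv : (nxt u).val ≤ v.val := hnxtle u (hCsub hu) v hvP huv
        have hgu := hgap u (hCsub hu)
        omega
      rcases lt_trichotomy x y with h | h | h
      · exact hcase x hx y hy h h1.1 h1.2 h2.1
      · exact hxy h
      · exact hcase y hy x hx h h2.1 h2.2 h1.1
    have hblkcard : ∀ a ∈ C, k - 1 ≤ (blk a).card := by
      intro a haC
      have hgapa := hgap a (hCsub haC)
      have hN : a.val + k ≤ N := le_of_lt (lt_of_le_of_lt hgapa (nxt a).isLt)
      have : (Finset.univ : Finset (Fin (k-1))).card ≤ (blk a).card := by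
        refine Finset.card_le_card_of_injOn
          (fun s => (⟨a.val + 1 + s.val, by omega⟩ : Fin N)) ?_ ?_
        · intro s _
          have hs := s.isLt
          refine Finset.mem_filter.mpr ⟨Finset.mem_univ _, ?_, ?_⟩
          · show a.val < a.val + 1 + s.val; omega
          · show a.val + 1 + s.val < a.val + k; omega
        · intro s _ t _ hst
          have h : a.val + 1 + s.val = a.val + 1 + t.val := congrArg Fin.val hst
          exact Fin.ext (by omega)
      simpa using this
    have hBcard : C.card * (k - 1) ≤ B.card := by
      rw [hB, Finset.card_biUnion hdisj]
      calc C.card * (k - 1) = ∑ _a ∈ C, (k - 1) := by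
            rw [Finset.sum_const, smul_eq_mul, mul_comm]
        _ ≤ ∑ a ∈ C, (blk a).card := Finset.sum_le_sum hblkcard
    have hsplit : C.card + U.card = (P.erase M).card :=
      Finset.card_filter_add_card_filter_not _
    have hPcard : (P.erase M).card + 1 = P.card := Finset.card_erase_add_one hMP
    calc (k - 1) * P.card = (k - 1) * C.card + (k - 1) * (U.card + 1) := by
          rw [← mul_add]; congr 1; omega
      _ ≤ B.card + (k - 1) * c := by
          have h1 : (k - 1) * C.card ≤ B.card := by rw [mul_comm]; exact hBcard
          have h2 : (k - 1) * (U.card + 1) ≤ (k - 1) * c :=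
            Nat.mul_le_mul_left _ hUcard
          omega
      _ = (k - 1) * c + B.card := by ring

/-- lower bound k*(kq-m)/(k-1) on the number of components needed
so that at least q members of each of the k families (of m members each) are
positive. -/
theorem positivity_components_lower_bound
    (k m q : ℕ) (hk : 2 ≤ k) (hm : 1 ≤ m) (hq : q ≤ m) :
    ∃ (V : Fin (m * k) → Measure ℝ) (f : Fin (m * k) → Fin k),
      (∀ i, IsProbabilityMeasure (V i)) ∧
      (∀ i, V i (Icc (0:ℝ) (m * k)) = 1) ∧
      (∀ i, V i ≪ volume) ∧
      (∀ j : Fin k, (Finset.univ.filter (fun i : Fin (m * k) => f i = j)).card = m) ∧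
      ∀ (X : Fin k → Set ℝ) (c : Fin k → ℕ),
        (∀ j, IsUnionOfIntervals (X j) (c j)) →
        Pairwise (Function.onFun Disjoint X) →
        (⋃ j, X j) = Icc (0:ℝ) (m * k) →
        (∀ j : Fin k,
          q ≤ (Finset.univ.filter
                (fun i : Fin (m * k) => f i = j ∧ 0 < V i (X j))).card) →
        (k : ℝ) * ((k : ℝ) * q - m) / ((k : ℝ) - 1) ≤ (∑ j, c j : ℝ) := by
  have hk0 : 0 < k := by omega
  set N := m * k with hN
  set V : Fin N → Measure ℝ :=
    fun i => volume.restrict (Ioo (i.val : ℝ) (i.val + 1)) with hV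
  set f : Fin N → Fin k := fun i => ⟨i.val % k, Nat.mod_lt _ hk0⟩ with hf
  have hVapp : ∀ (i : Fin N) (s : Set ℝ),
      V i s = volume (s ∩ Ioo (i.val : ℝ) (i.val + 1)) := by
    intro i s
    exact Measure.restrict_apply' measurableSet_Ioo
  refine ⟨V, f, ?_, ?_, ?_, ?_, ?_⟩
  · intro i
    constructor
    rw [hVapp, Set.univ_inter, Real.volume_Ioo]
    norm_num
  · intro i
    rw [hVapp]
    have hsub : Ioo (i.val : ℝ) (i.val + 1) ⊆ Icc (0:ℝ) (m * k) := by
      intro x hx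
      have h1 : (0:ℝ) ≤ i.val := Nat.cast_nonneg _
      have h2 : (i.val : ℝ) + 1 ≤ (m * k : ℕ) := by
        exact_mod_cast Nat.succ_le_of_lt i.isLt
      constructor
      · linarith [hx.1]
      · push_cast at h2 ⊢
        linarith [hx.2]
    rw [Set.inter_eq_self_of_subset_right hsub, Real.volume_Ioo]
    norm_num
  · intro i
    exact Measure.restrict_le_self.absolutelyContinuous
  · -- each family has m members
    intro j
    have hcard : (Finset.univ.filter (fun i : Fin N => f i = j)).card
        = (Finset.univ : Finset (Fin m)).card := by
      refine Finset.card_bij' (fun i _ => (⟨i.val / k, ?_⟩ : Fin m))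
        (fun a _ => (⟨a.val * k + j.val, ?_⟩ : Fin N)) ?_ ?_ ?_ ?_
      · exact Nat.div_lt_of_lt_mul (by rw [mul_comm]; exact i.isLt)
      · calc a.val * k + j.val < a.val * k + k := by omega
          _ = (a.val + 1) * k := by ring
          _ ≤ m * k := Nat.mul_le_mul_right _ a.isLt
      · intro a _; exact Finset.mem_univ _
      · intro a _
        refine Finset.mem_filter.mpr ⟨Finset.mem_univ _, ?_⟩
        apply Fin.ext
        show (a.val * k + j.val) % k = j.val
        rw [add_comm, Nat.add_mul_mod_self_right]
        exact Nat.mod_eq_of_lt j.isLt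
      · intro a ha
        have hmod : a.val % k = j.val := by
          have := (Finset.mem_filter.mp ha).2
          exact congrArg Fin.val this
        apply Fin.ext
        show a.val / k * k + j.val = a.val
        conv_rhs => rw [← Nat.div_add_mod a.val k]
        rw [hmod, Nat.mul_comm]
      · intro a _
        apply Fin.ext
        show (a.val * k + j.val) / k = a.val
        rw [mul_comm, Nat.mul_add_div hk0, Nat.div_eq_of_lt j.isLt, add_zero]
    rw [hcard, Finset.card_univ, Fintype.card_fin]
  · -- main bound
    intro X c hX hdis hcover hpos
    set Pos : Fin k → Finset (Fin N) :=
      fun j => Finset.univ.filter (fun i : Fin N => f i = j ∧ 0 < V i (X j)) with hPos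
    -- per-family blocked sets
    have hBex : ∀ j : Fin k, ∃ B : Finset (Fin N),
        (∀ b ∈ B, b.val % k ≠ j.val ∧ Ioo (b.val : ℝ) (b.val + 1) ⊆ X j) ∧
        (k - 1) * (Pos j).card ≤ (k - 1) * c j + B.card := by
      intro j
      obtain ⟨I, hI, hXI⟩ := hX j
      have := family_bound N k (c j) j.val (by omega) I hI (Pos j)
        (fun a ha => congrArg Fin.val (Finset.mem_filter.mp ha).2.1)
        ?_
      · obtain ⟨B, hB1, hB2⟩ := this
        exact ⟨B, fun b hb => ⟨(hB1 b hb).1, by rw [hXI]; exact (hB1 b hb).2⟩, hB2⟩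
      · intro a ha
        have hpos' := (Finset.mem_filter.mp ha).2.2
        rw [hVapp] at hpos'
        by_contra hall
        push_neg at hall
        have : X j ∩ Ioo (a.val : ℝ) (a.val + 1) = ∅ := by
          rw [hXI, Set.iUnion_inter]
          apply Set.iUnion_eq_empty.mpr
          intro r
          exact hall r
        rw [this] at hpos'
        simp at hpos'
    choose B hB1 hB2 using hBex
    -- blocked cells are disjoint across families and are non-positive agents
    set Bad : Finset (Fin N) :=
      Finset.univ.filter (fun a : Fin N => ¬ (0 < V a (X (f a)))) with hBad
    have hBsub : ∀ j, B j ⊆ Bad := by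
      intro j b hb
      obtain ⟨hbj, hbX⟩ := hB1 j b hb
      refine Finset.mem_filter.mpr ⟨Finset.mem_univ _, ?_⟩
      have hfbj : f b ≠ j := by
        intro h
        exact hbj (congrArg Fin.val h)
      have hdj : Disjoint (X (f b)) (X j) := hdis hfbj
      rw [hVapp]
      have : X (f b) ∩ Ioo (b.val : ℝ) (b.val + 1) = ∅ := by
        apply Set.eq_empty_of_subset_empty
        intro x hx
        exact (Set.disjoint_left.mp hdj hx.1 (hbX hx.2)).elim
      rw [this]
      simp
    have hBdisj : ∀ x ∈ (Finset.univ : Finset (Fin k)), ∀ y ∈ Finset.univ,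
        x ≠ y → Disjoint (B x) (B y) := by
      intro x _ y _ hxy
      rw [Finset.disjoint_left]
      intro b hbx hby
      have h1 := (hB1 x b hbx).2
      have h2 := (hB1 y b hby).2
      have hne : (Ioo (b.val : ℝ) (b.val + 1)).Nonempty := by
        refine ⟨b.val + 1/2, ?_, ?_⟩ <;> norm_num
      obtain ⟨z, hz⟩ := hne
      exact Set.disjoint_left.mp (hdis hxy) (h1 hz) (h2 hz)
    -- Pos sets are disjoint and in the complement of Bad
    have hPosdisj : ∀ x ∈ (Finset.univ : Finset (Fin k)), ∀ y ∈ Finset.univ,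
        x ≠ y → Disjoint (Pos x) (Pos y) := by
      intro x _ y _ hxy
      rw [Finset.disjoint_left]
      intro a hax hay
      exact hxy ((Finset.mem_filter.mp hax).2.1.symm.trans (Finset.mem_filter.mp hay).2.1)
    set Good : Finset (Fin N) :=
      Finset.univ.filter (fun a : Fin N => 0 < V a (X (f a))) with hGood
    have hPosGood : Finset.univ.biUnion Pos = Good := by
      apply Finset.ext
      intro a
      constructor
      · intro ha
        obtain ⟨j, -, haj⟩ := Finset.mem_biUnion.mp ha
        obtain ⟨-, hfa, hp⟩ := Finset.mem_filter.mp haj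
        refine Finset.mem_filter.mpr ⟨Finset.mem_univ _, ?_⟩
        rw [hfa]; exact hp
      · intro ha
        have hp := (Finset.mem_filter.mp ha).2
        exact Finset.mem_biUnion.mpr ⟨f a, Finset.mem_univ _,
          Finset.mem_filter.mpr ⟨Finset.mem_univ _, rfl, hp⟩⟩
    have hGoodBad : Good.card + Bad.card = N := by
      have h := Finset.card_filter_add_card_filter_not
        (s := (Finset.univ : Finset (Fin N)))
        (fun a : Fin N => 0 < V a (X (f a)))
      rw [Finset.card_univ, Fintype.card_fin] at h
      exact h
    have hSumPos : ∑ j, (Pos j).card = Good.card := by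
      rw [← hPosGood, Finset.card_biUnion hPosdisj]
    have hSumB : ∑ j, (B j).card ≤ Bad.card := by
      calc ∑ j, (B j).card = (Finset.univ.biUnion B).card :=
            (Finset.card_biUnion hBdisj).symm
        _ ≤ Bad.card := Finset.card_le_card (by
            intro b hb
            obtain ⟨j, -, hbj⟩ := Finset.mem_biUnion.mp hb
            exact hBsub j hbj)
    -- total counting
    have hkq : k * q ≤ Good.card := by
      rw [← hSumPos]
      calc k * q = ∑ _j : Fin k, q := by simp [mul_comm]
        _ ≤ ∑ j, (Pos j).card := Finset.sum_le_sum (fun j _ => hpos j)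
    have hmain : (k - 1) * Good.card ≤ (k - 1) * (∑ j, c j) + Bad.card := by
      calc (k - 1) * Good.card = ∑ j, (k - 1) * (Pos j).card := by
            rw [← hSumPos, Finset.mul_sum]
        _ ≤ ∑ j, ((k - 1) * c j + (B j).card) := Finset.sum_le_sum (fun j _ => hB2 j)
        _ = (k - 1) * (∑ j, c j) + ∑ j, (B j).card := by
            rw [Finset.sum_add_distrib, Finset.mul_sum]
        _ ≤ (k - 1) * (∑ j, c j) + Bad.card := by omega
    -- convert to reals
    have hk1 : (0:ℝ) < (k:ℝ) - 1 := by
      have : (2:ℝ) ≤ (k:ℝ) := by exact_mod_cast hk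
      linarith
    rw [div_le_iff₀ hk1]
    set t := ∑ j, c j with ht
    have hGN : Good.card ≤ N := by omega
    have c1 : ((k:ℝ) - 1) * Good.card ≤ ((k:ℝ) - 1) * t + Bad.card := by
      have : ((k - 1 : ℕ) : ℝ) * (Good.card : ℝ) ≤
          ((k - 1 : ℕ) : ℝ) * (t : ℝ) + (Bad.card : ℝ) := by
        exact_mod_cast hmain
      rwa [Nat.cast_sub (by omega), Nat.cast_one] at this
    have c2 : (Good.card : ℝ) + (Bad.card : ℝ) = (m : ℝ) * k := by
      have : ((Good.card + Bad.card : ℕ) : ℝ) = ((m * k : ℕ) : ℝ) := by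
        exact_mod_cast congrArg (Nat.cast : ℕ → ℝ) hGoodBad
      push_cast at this
      linarith
    have c3 : (k : ℝ) * q ≤ Good.card := by exact_mod_cast hkq
    have hk0r : (0:ℝ) ≤ (k:ℝ) := Nat.cast_nonneg _
    have c4 : (k:ℝ) * ((k:ℝ) * q) ≤ (k:ℝ) * Good.card :=
      mul_le_mul_of_nonneg_left c3 hk0r
    have hsum : (∑ j, ((c j : ℕ) : ℝ)) = ((t : ℕ) : ℝ) := by
      rw [ht]; push_cast; ring
    rw [hsum]
    nlinarith [c1, c2, c4]
end

section
/- For every k >= 3 and every m, there exist n = mk agents in k equal families such that any democratic-proportional allocation (at least half of each family's members value their family's piece at least 1/k, hence positively) requires at least n * (k/2 - 1)/(k - 1) connected components. -/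
open MeasureTheory Set
open scoped Classical

lemma residue_count (m k : ℕ) (hk : 0 < k) (j : ℕ) (hj : j < k) :
    (Finset.univ.filter (fun i : Fin (m*k) => (i : ℕ) % k = j)).card = m := by
  have h : (Finset.univ.filter (fun i : Fin (m*k) => (i : ℕ) % k = j)).card
      = (Finset.univ : Finset (Fin m)).card := by
    refine Finset.card_bij' (fun (i : Fin (m*k)) (_ : i ∈ _) => (⟨(i:ℕ)/k,
        (Nat.div_lt_iff_lt_mul hk).mpr i.isLt⟩ : Fin m))
      (fun (q : Fin m) (_ : q ∈ _) => (⟨(q:ℕ)*k + j, by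
        have := q.isLt
        calc (q:ℕ)*k + j < (q:ℕ)*k + k := by omega
          _ = ((q:ℕ)+1)*k := by ring
          _ ≤ m*k := Nat.mul_le_mul_right k (by omega)⟩ : Fin (m*k))) ?_ ?_ ?_ ?_
    · intro i _; exact Finset.mem_univ _
    · intro q _
      simp only [Finset.mem_filter, Finset.mem_univ, true_and]
      rw [mul_comm, Nat.mul_add_mod]
      exact Nat.mod_eq_of_lt hj
    · intro i hi
      simp only [Finset.mem_filter, Finset.mem_univ, true_and] at hi
      apply Fin.ext
      simp only
      rw [mul_comm]
      have := Nat.div_add_mod (i:ℕ) k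
      omega
    · intro q _
      apply Fin.ext
      simp only
      rw [mul_comm, Nat.mul_add_div hk]
      simp [Nat.div_eq_of_lt hj]
  rw [h]; simp

lemma mod_ne_of_between (k a u j : ℕ) (ha : a % k = j) (h1 : 1 ≤ u) (h2 : u < k) :
    (a + u) % k ≠ j := by
  have hj : j < k := ha ▸ Nat.mod_lt a (by omega)
  rw [Nat.add_mod, ha, Nat.mod_eq_of_lt h2]
  rcases lt_or_ge (j + u) k with h | h
  · rw [Nat.mod_eq_of_lt h]; omega
  · have : (j + u) % k = j + u - k := by
      rw [Nat.mod_eq_sub_mod h, Nat.mod_eq_of_lt (by omega)]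
    omega

lemma family_component_bound
    (n k c j : ℕ) (hk : 3 ≤ k)
    (X : Set ℝ) (I : Fin c → Set ℝ)
    (hI : ∀ r, (I r).OrdConnected) (hX : X = ⋃ r, I r)
    (P B : Finset (Fin n))
    (hP : ∀ i ∈ P, (i : ℕ) % k = j ∧ (X ∩ Set.Ioo ((i:ℕ):ℝ) ((i:ℕ)+1)).Nonempty)
    (hB : ∀ l : Fin n, (l:ℕ) % k ≠ j → Set.Ioo ((l:ℕ):ℝ) ((l:ℕ)+1) ⊆ X → l ∈ B) :
    (k-1) * P.card ≤ B.card + (k-1) * c := by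
  rcases Nat.eq_zero_or_pos P.card with h0 | hpos
  · simp [h0]
  set p := P.card with hpdef
  set e : Fin p → Fin n := fun s => ((P.orderIsoOfFin hpdef.symm) s : Fin n) with he
  have heP : ∀ s, e s ∈ P := fun s => ((P.orderIsoOfFin hpdef.symm) s).2
  have hemono : StrictMono e := fun a b hab =>
    Subtype.coe_lt_coe.mpr ((P.orderIsoOfFin hpdef.symm).strictMono hab)
  have hres : ∀ s, ((e s : Fin n):ℕ) % k = j := fun s => (hP _ (heP s)).1
  have hw : ∀ s : Fin p, ∃ r : Fin c,
      (I r ∩ Set.Ioo (((e s : Fin n):ℕ):ℝ) (((e s : Fin n):ℕ)+1)).Nonempty := by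
    intro s
    obtain ⟨x, hxX, hxA⟩ := (hP _ (heP s)).2
    rw [hX] at hxX
    obtain ⟨r, hr⟩ := Set.mem_iUnion.mp hxX
    exact ⟨r, x, hr, hxA⟩
  choose h hh using hw
  -- containment lemma
  have contain : ∀ (r : Fin c) (a b l : Fin n),
      (I r ∩ Set.Ioo ((a:ℕ):ℝ) ((a:ℕ)+1)).Nonempty →
      (I r ∩ Set.Ioo ((b:ℕ):ℝ) ((b:ℕ)+1)).Nonempty →
      (a:ℕ) < (l:ℕ) → (l:ℕ) < (b:ℕ) →
      Set.Ioo ((l:ℕ):ℝ) ((l:ℕ)+1) ⊆ I r := by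
    rintro r a b l ⟨x, hxI, hxa⟩ ⟨y, hyI, hyb⟩ hal hlb z hz
    have h1 : x ≤ z := by
      have hcast : ((a:ℕ):ℝ) + 1 ≤ ((l:ℕ):ℝ) := by exact_mod_cast Nat.succ_le_of_lt hal
      linarith [hxa.2, hz.1]
    have h2 : z ≤ y := by
      have hcast : ((l:ℕ):ℝ) + 1 ≤ ((b:ℕ):ℝ) := by exact_mod_cast Nat.succ_le_of_lt hlb
      linarith [hyb.1, hz.2]
    exact (hI r).out hxI hyI ⟨h1, h2⟩
  set linked : Fin p → Prop :=
    fun s => ∃ hs : (s:ℕ)+1 < p, ∃ r : Fin c,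
      (I r ∩ Set.Ioo (((e s : Fin n):ℕ):ℝ) (((e s : Fin n):ℕ)+1)).Nonempty ∧
      (I r ∩ Set.Ioo (((e ⟨(s:ℕ)+1, hs⟩ : Fin n):ℕ):ℝ)
        (((e ⟨(s:ℕ)+1, hs⟩ : Fin n):ℕ)+1)).Nonempty with hlinked
  set Lset : Finset (Fin p) := Finset.univ.filter linked with hLsetdef
  -- aux: a component meeting two agents makes all intermediate pairs linked
  have haux : ∀ (s s' : Fin p) (r : Fin c), s < s' →
      (I r ∩ Set.Ioo (((e s : Fin n):ℕ):ℝ) (((e s : Fin n):ℕ)+1)).Nonempty →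
      (I r ∩ Set.Ioo (((e s' : Fin n):ℕ):ℝ) (((e s' : Fin n):ℕ)+1)).Nonempty →
      linked s := by
    intro s s' r hss hs1 hs2
    have hs : (s:ℕ)+1 < p := lt_of_le_of_lt (Nat.succ_le_of_lt hss) s'.isLt
    refine ⟨hs, r, hs1, ?_⟩
    by_cases heq : (⟨(s:ℕ)+1, hs⟩ : Fin p) = s'
    · rw [heq]; exact hs2
    · have hlt1 : e s < e ⟨(s:ℕ)+1, hs⟩ := hemono (by simp [Fin.lt_def])
      have hlt2 : e ⟨(s:ℕ)+1, hs⟩ < e s' := hemono (by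
        have hne : (s:ℕ)+1 ≠ (s':ℕ) := fun hh => heq (Fin.ext hh)
        have : (s:ℕ)+1 < (s':ℕ) := lt_of_le_of_ne (Nat.succ_le_of_lt hss) hne
        simpa [Fin.lt_def])
      have hsub := contain r (e s) (e s') (e ⟨(s:ℕ)+1, hs⟩) hs1 hs2
        (Fin.lt_def.mp hlt1) (Fin.lt_def.mp hlt2)
      obtain ⟨z, hz⟩ := Set.nonempty_Ioo.mpr
        (by linarith : (((e ⟨(s:ℕ)+1, hs⟩ : Fin n):ℕ):ℝ) < ((e ⟨(s:ℕ)+1, hs⟩ : Fin n):ℕ)+1)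
      exact ⟨z, hsub hz, hz⟩
  -- Claim A : p ≤ Lset.card + c
  have hA : p ≤ Lset.card + c := by
    have hU : (Finset.univ.filter (fun s => ¬ linked s)).card ≤ c := by
      have hinj : Set.InjOn h ↑(Finset.univ.filter (fun s => ¬ linked s)) := by
        intro s hs s' hs' hss
        by_contra hne
        simp only [Finset.coe_filter, Set.mem_setOf_eq] at hs hs'
        rcases lt_or_gt_of_ne hne with hlt | hlt
        · exact hs.2 (haux s s' (h s) hlt (hh s) (by rw [hss]; exact hh s'))
        · exact hs'.2 (haux s' s (h s') hlt (hh s') (by rw [← hss]; exact hh s))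
      calc (Finset.univ.filter (fun s => ¬ linked s)).card
          ≤ (Finset.univ : Finset (Fin c)).card :=
            Finset.card_le_card_of_injOn h (fun a _ => Finset.mem_univ _) hinj
        _ = c := by simp
    have hpart := Finset.card_filter_add_card_filter_not
      (s := (Finset.univ : Finset (Fin p))) (p := linked)
    simp only [Finset.card_univ, Fintype.card_fin] at hpart
    rw [hLsetdef]
    omega
  -- the killed sets
  set succE : Fin p → Fin p :=
    fun s => if hs : (s:ℕ)+1 < p then ⟨(s:ℕ)+1, hs⟩ else s with hsuccE
  set D : Fin p → Finset (Fin n) := fun s =>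
    Finset.univ.filter (fun l : Fin n =>
      ((e s : Fin n):ℕ) < (l:ℕ) ∧ (l:ℕ) < ((e (succE s) : Fin n):ℕ) ∧ (l:ℕ) % k ≠ j)
    with hD
  have hDB : ∀ s ∈ Lset, D s ⊆ B := by
    intro s hsL l hl
    obtain ⟨hs, r, hr1, hr2⟩ := (Finset.mem_filter.mp hsL).2
    simp only [hD, Finset.mem_filter, Finset.mem_univ, true_and] at hl
    obtain ⟨h1, h2, h3⟩ := hl
    have hsucc : succE s = ⟨(s:ℕ)+1, hs⟩ := dif_pos hs
    apply hB l h3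
    rw [hsucc] at h2
    have hsub := contain r (e s) (e ⟨(s:ℕ)+1,hs⟩) l hr1 hr2 h1 h2
    refine hsub.trans ?_
    rw [hX]; exact Set.subset_iUnion I r
  have hDcard : ∀ s ∈ Lset, k - 1 ≤ (D s).card := by
    intro s hsL
    obtain ⟨hs, r, hr1, hr2⟩ := (Finset.mem_filter.mp hsL).2
    have hsucc : succE s = ⟨(s:ℕ)+1, hs⟩ := dif_pos hs
    have hab : ((e s : Fin n):ℕ) < ((e (succE s) : Fin n):ℕ) := by
      apply Fin.lt_def.mp
      apply hemono
      rw [hsucc]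
      exact Fin.lt_def.mpr (by simp)
    set a := ((e s : Fin n):ℕ) with hadef
    set b := ((e (succE s) : Fin n):ℕ) with hbdef
    have hbn : b < n := (e (succE s)).isLt
    have hamod : a % k = j := hres s
    have hbmod : b % k = j := hres (succE s)
    have hdvd : k ∣ b - a := (Nat.modEq_iff_dvd' (le_of_lt hab)).mp
      (show a % k = b % k by rw [hamod, hbmod])
    have hka : a + k ≤ b := by
      have := Nat.le_of_dvd (by omega) hdvd
      omega
    have hcard : (Finset.Ioo a (a+k)).card = k - 1 := by
      rw [Nat.card_Ioo]; omega
    rw [← hcard]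
    apply Finset.card_le_card_of_injOn (fun u => (⟨min u (n-1), by omega⟩ : Fin n))
    · intro u hu
      rw [Finset.mem_coe, Finset.mem_Ioo] at hu
      have hmin : min u (n-1) = u := by omega
      simp only [Finset.mem_coe, hD, Finset.mem_filter, Finset.mem_univ, true_and, hmin]
      refine ⟨by omega, by omega, ?_⟩
      have hsplit : u = a + (u - a) := by omega
      rw [hsplit]
      exact mod_ne_of_between k a (u-a) j hamod (by omega) (by omega)
    · intro u hu v hv huv
      simp only [Finset.coe_Ioo, Set.mem_Ioo] at hu hv
      have := congrArg Fin.val huv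
      simp only at this
      omega
  have hDdisj : ∀ s ∈ Lset, ∀ s' ∈ Lset, s ≠ s' → Disjoint (D s) (D s') := by
    have key : ∀ s ∈ Lset, ∀ s' ∈ Lset, s < s' → Disjoint (D s) (D s') := by
      intro s hsL s' hsL' hss
      obtain ⟨hs, _⟩ := (Finset.mem_filter.mp hsL).2
      have hsucc : succE s = ⟨(s:ℕ)+1, hs⟩ := dif_pos hs
      rw [Finset.disjoint_left]
      intro l hl hl'
      simp only [hD, Finset.mem_filter, Finset.mem_univ, true_and] at hl hl'
      have hle : ((e (succE s) : Fin n):ℕ) ≤ ((e s' : Fin n):ℕ) := by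
        apply Fin.le_def.mp
        apply hemono.monotone
        rw [hsucc]
        exact Fin.le_def.mpr (by simpa using Nat.succ_le_of_lt (Fin.lt_def.mp hss))
      omega
    intro s hsL s' hsL' hne
    rcases lt_or_gt_of_ne hne with hlt | hlt
    · exact key s hsL s' hsL' hlt
    · exact (key s' hsL' s hsL hlt).symm
  have hBL : (k-1) * Lset.card ≤ B.card := by
    calc (k-1) * Lset.card = ∑ _s ∈ Lset, (k-1) := by
          rw [Finset.sum_const, smul_eq_mul, mul_comm]
      _ ≤ ∑ s ∈ Lset, (D s).card := Finset.sum_le_sum hDcard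
      _ = (Lset.biUnion D).card := (Finset.card_biUnion hDdisj).symm
      _ ≤ B.card := Finset.card_le_card (by
          intro l hl
          obtain ⟨s, hs, hls⟩ := Finset.mem_biUnion.mp hl
          exact hDB s hs hls)
  calc (k-1) * p ≤ (k-1) * (Lset.card + c) := Nat.mul_le_mul_left _ hA
    _ = (k-1) * Lset.card + (k-1) * c := by ring
    _ ≤ B.card + (k-1) * c := by omega

/-- lower bound n*(k/2-1)/(k-1) on the number of components of
any democratic-proportional allocation, for k ≥ 3 families. -/
theorem democratic_proportional_lower_bound
    (k m : ℕ) (hk : 3 ≤ k) (hm : 1 ≤ m) :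
    ∃ (V : Fin (m * k) → Measure ℝ) (f : Fin (m * k) → Fin k),
      (∀ i, IsProbabilityMeasure (V i)) ∧
      (∀ i, V i (Icc (0:ℝ) (m * k)) = 1) ∧
      (∀ i, V i ≪ volume) ∧
      (∀ j : Fin k, (Finset.univ.filter (fun i : Fin (m * k) => f i = j)).card = m) ∧
      ∀ (X : Fin k → Set ℝ) (c : Fin k → ℕ),
        (∀ j, IsUnionOfIntervals (X j) (c j)) →
        Pairwise (Function.onFun Disjoint X) →
        (⋃ j, X j) = Icc (0:ℝ) (m * k) →
        -- democratic proportionality: at least half of each family's members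
        -- value their family's piece at least 1/k
        (∀ j : Fin k,
          2 * (Finset.univ.filter
                (fun i : Fin (m * k) => f i = j ∧
                  1 / (k : ℝ) ≤ (V i (X j)).toReal)).card ≥ m) →
        ((m * k : ℕ) : ℝ) * ((k : ℝ) / 2 - 1) / ((k : ℝ) - 1) ≤ (∑ j, c j : ℝ) := by
  have hk0 : 0 < k := by omega
  set V : Fin (m*k) → Measure ℝ :=
    fun i => volume.restrict (Set.Ioo ((i:ℕ):ℝ) ((i:ℕ)+1)) with hV
  set f : Fin (m*k) → Fin k := fun i => ⟨(i:ℕ) % k, Nat.mod_lt _ hk0⟩ with hf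
  refine ⟨V, f, ?_, ?_, ?_, ?_, ?_⟩
  · -- probability measures
    intro i
    constructor
    rw [hV]
    simp only [Measure.restrict_apply_univ, Real.volume_Ioo]
    norm_num
  · -- supported on [0, mk]
    intro i
    have hsub : Set.Ioo ((i:ℕ):ℝ) ((i:ℕ)+1) ⊆ Set.Icc 0 ((m:ℝ)*(k:ℝ)) := by
      intro x hx
      have h1 : (0:ℝ) ≤ ((i:ℕ):ℝ) := Nat.cast_nonneg _
      have h2 : ((i:ℕ):ℝ) + 1 ≤ (m:ℝ)*(k:ℝ) := by
        have := Nat.succ_le_of_lt i.isLt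
        exact_mod_cast this
      exact ⟨by linarith [hx.1], by linarith [hx.2]⟩
    rw [hV]
    simp only
    rw [Measure.restrict_apply measurableSet_Icc,
      Set.inter_eq_self_of_subset_right hsub, Real.volume_Ioo]
    norm_num
  · -- absolutely continuous
    intro i
    exact Measure.absolutelyContinuous_of_le Measure.restrict_le_self
  · -- family sizes
    intro j
    rw [show (Finset.univ.filter (fun i : Fin (m*k) => f i = j))
        = (Finset.univ.filter (fun i : Fin (m*k) => (i:ℕ) % k = (j:ℕ))) from
      Finset.filter_congr (fun i _ => by
        rw [hf]; simp only; rw [Fin.ext_iff])]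
    exact residue_count m k hk0 j j.isLt
  · -- main bound
    intro X c hXI hdisj hcover hdem
    set P : Fin k → Finset (Fin (m*k)) := fun j => Finset.univ.filter
      (fun i => f i = j ∧ 1/(k:ℝ) ≤ ((V i) (X j)).toReal) with hPdef
    set B : Fin k → Finset (Fin (m*k)) := fun j => Finset.univ.filter
      (fun l => (l:ℕ) % k ≠ (j:ℕ) ∧ Set.Ioo ((l:ℕ):ℝ) ((l:ℕ)+1) ⊆ X j) with hBdef
    have hVapply : ∀ (i : Fin (m*k)) (S : Set ℝ),
        V i S = volume (S ∩ Set.Ioo ((i:ℕ):ℝ) ((i:ℕ)+1)) := by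
      intro i S
      rw [hV]
      exact Measure.restrict_apply' measurableSet_Ioo
    have hkR : (0:ℝ) < 1/(k:ℝ) := by
      have : (0:ℝ) < (k:ℝ) := by exact_mod_cast hk0
      positivity
    have key : ∀ j : Fin k, (k-1) * (P j).card ≤ (B j).card + (k-1) * (c j) := by
      intro j
      obtain ⟨I, hIconn, hIX⟩ := hXI j
      apply family_component_bound (m*k) k (c j) (j:ℕ) hk (X j) I hIconn hIX
      · intro i hi
        simp only [hPdef, Finset.mem_filter, Finset.mem_univ, true_and] at hi
        obtain ⟨hfi, hval⟩ := hi
        constructor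
        · rw [← hfi]
        · by_contra hemp
          rw [Set.not_nonempty_iff_eq_empty] at hemp
          have h0 : V i (X j) = 0 := by
            rw [hVapply, hemp, measure_empty]
          rw [h0] at hval
          simp only [ENNReal.toReal_zero] at hval
          linarith
      · intro l hne hsub
        simp only [hBdef, Finset.mem_filter, Finset.mem_univ, true_and]
        exact ⟨hne, hsub⟩
    have hBnotP : ∀ j j' : Fin k, ∀ l, l ∈ B j → l ∉ P j' := by
      intro j j' l hlB hlP
      simp only [hBdef, Finset.mem_filter, Finset.mem_univ, true_and] at hlB
      simp only [hPdef, Finset.mem_filter, Finset.mem_univ, true_and] at hlP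
      obtain ⟨hmod, hsub⟩ := hlB
      obtain ⟨hfl, hval⟩ := hlP
      have hj'j : j' ≠ j := by
        intro hEq
        apply hmod
        rw [← hEq, ← hfl]
      have hV0 : V l (X j') = 0 := by
        rw [hVapply]
        have hempty : X j' ∩ Set.Ioo ((l:ℕ):ℝ) ((l:ℕ)+1) = ∅ := by
          rw [Set.eq_empty_iff_forall_notMem]
          rintro x ⟨hx1, hx2⟩
          exact Set.disjoint_left.mp (hdisj hj'j) hx1 (hsub hx2)
        rw [hempty, measure_empty]
      rw [hV0] at hval
      simp only [ENNReal.toReal_zero] at hval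
      linarith
    have hPP : ∀ j j' : Fin k, j ≠ j' → ∀ l, l ∈ P j → l ∉ P j' := by
      intro j j' hne l h1 h2
      simp only [hPdef, Finset.mem_filter, Finset.mem_univ, true_and] at h1 h2
      exact hne (h1.1 ▸ h2.1 ▸ rfl)
    have hBB : ∀ j j' : Fin k, j ≠ j' → ∀ l, l ∈ B j → l ∉ B j' := by
      intro j j' hne l h1 h2
      simp only [hBdef, Finset.mem_filter, Finset.mem_univ, true_and] at h1 h2
      have hx : ((l:ℕ):ℝ) + 1/2 ∈ Set.Ioo ((l:ℕ):ℝ) ((l:ℕ)+1) := by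
        constructor <;> norm_num
      have hXne : X j ≠ X j' → True := fun _ => trivial
      exact Set.disjoint_left.mp (hdisj hne) (h1.2 hx) (h2.2 hx)
    set G : Fin k → Finset (Fin (m*k)) := fun j => P j ∪ B j with hG
    have hGdisj : ∀ j ∈ (Finset.univ : Finset (Fin k)), ∀ j' ∈ (Finset.univ : Finset (Fin k)),
        j ≠ j' → Disjoint (G j) (G j') := by
      intro j _ j' _ hne
      rw [Finset.disjoint_left]
      intro l hl hl'
      rw [hG] at hl hl'
      rcases Finset.mem_union.mp hl with h | h <;> rcases Finset.mem_union.mp hl' with h' | h'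
      · exact hPP j j' hne l h h'
      · exact hBnotP j' j l h' h
      · exact hBnotP j j' l h h'
      · exact hBB j j' hne l h h'
    have hGcard : ∀ j, (G j).card = (P j).card + (B j).card := by
      intro j
      rw [hG]
      apply Finset.card_union_of_disjoint
      rw [Finset.disjoint_left]
      intro l hl hl'
      exact hBnotP j j l hl' hl
    have htot : ∑ j, ((P j).card + (B j).card) ≤ m * k := by
      calc ∑ j, ((P j).card + (B j).card) = ∑ j, (G j).card :=
            Finset.sum_congr rfl (fun j _ => (hGcard j).symm)
        _ = (Finset.univ.biUnion G).card := (Finset.card_biUnion hGdisj).symm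
        _ ≤ (Finset.univ : Finset (Fin (m*k))).card :=
            Finset.card_le_card (Finset.subset_univ _)
        _ = m * k := by simp
    have hsum1 : (k-1) * (∑ j, (P j).card) ≤ (∑ j, (B j).card) + (k-1) * (∑ j, (c j)) := by
      rw [Finset.mul_sum, Finset.mul_sum, ← Finset.sum_add_distrib]
      exact Finset.sum_le_sum (fun j _ => key j)
    have hsum2 : k * m ≤ 2 * ∑ j, (P j).card := by
      calc k * m = ∑ _j : Fin k, m := by simp [mul_comm]
        _ ≤ ∑ j, 2 * (P j).card := Finset.sum_le_sum (fun j _ => hdem j)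
        _ = 2 * ∑ j, (P j).card := by rw [Finset.mul_sum]
    have hsplit : ∑ j, ((P j).card + (B j).card)
        = (∑ j, (P j).card) + (∑ j, (B j).card) := Finset.sum_add_distrib
    rw [hsplit] at htot
    -- now pass to the reals
    have hk1 : (1:ℕ) ≤ k := by omega
    have hkR3 : (3:ℝ) ≤ (k:ℝ) := by exact_mod_cast hk
    set Pt := ∑ j, (P j).card with hPt
    set Bt := ∑ j, (B j).card with hBt
    have r1 : ((k:ℝ)-1) * (Pt:ℝ) ≤ (Bt:ℝ) + ((k:ℝ)-1) * ((∑ j, (c j) : ℕ):ℝ) := by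
      have hc := (Nat.cast_le (α := ℝ)).mpr hsum1
      push_cast [Nat.cast_sub hk1] at hc
      push_cast
      convert hc using 2 <;> norm_num
    have r2 : (k:ℝ) * (m:ℝ) ≤ 2 * (Pt:ℝ) := by exact_mod_cast hsum2
    have r3 : (Pt:ℝ) + (Bt:ℝ) ≤ (m:ℝ) * (k:ℝ) := by exact_mod_cast htot
    have hCsum : ((∑ j, (c j) : ℕ):ℝ) = (∑ j, ((c j):ℝ)) := by push_cast; rfl
    rw [div_le_iff₀ (by linarith : (0:ℝ) < (k:ℝ)-1)]
    rw [← hCsum]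
    have r4 : (k:ℝ) * (Pt:ℝ) ≤ ((k:ℝ)-1) * ((∑ j, (c j) : ℕ):ℝ) + (m:ℝ)*(k:ℝ) := by
      nlinarith [r1, r3]
    have r5 : (k:ℝ) * ((k:ℝ)*(m:ℝ)) ≤ (k:ℝ) * (2 * (Pt:ℝ)) :=
      mul_le_mul_of_nonneg_left r2 (by linarith)
    push_cast
    nlinarith [r4, r5]
end
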